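/- arXiv:1912.00373 — 11 statements merged into one kernel-verified Lean document; each statement's English description precedes it below -/
import Mathlib

section
/- Consider the nonholonomic Chaplygin sphere in a solenoidal field, i.e. the equations (ch-eqm): γ̇ = γ×ω, Ṁ = (M + b(γ))×ω − ∇V(γ)×γ with ω = A_γM, where b: ℝ³→ℝ³ is any smooth field satisfying (γ, curl b(γ)) = 0 for all γ. Then the total mechanical energy H(γ,M) = ½(M, A_γM) + V(γ) is a first integral: its derivative along every solution vanishes identically. -/
noncomputable section

/-- ℝ³ as a phase-space component. -/
abbrev V3 := Fin 3 → ℝ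

/-- Cross product on ℝ³. -/
def cross3 (a b : V3) : V3 :=
  ![a 1 * b 2 - a 2 * b 1, a 2 * b 0 - a 0 * b 2, a 0 * b 1 - a 1 * b 0]

/-- Euclidean inner product on ℝ³. -/
def dot3 (a b : V3) : ℝ := a 0 * b 0 + a 1 * b 1 + a 2 * b 2

/-- Partial derivative of a scalar function on ℝ³ in the `i`-th coordinate direction. -/
def pd3 (f : V3 → ℝ) (γ : V3) (i : Fin 3) : ℝ := fderiv ℝ f γ (Pi.single i 1)

/-- Gradient of a scalar function on ℝ³. -/
def grad3 (V : V3 → ℝ) (γ : V3) : V3 := fun i => pd3 V γ i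

/-- Curl (rot) of a vector field on ℝ³. -/
def curl3 (b : V3 → V3) (γ : V3) : V3 :=
  ![pd3 (fun x => b x 2) γ 1 - pd3 (fun x => b x 1) γ 2,
    pd3 (fun x => b x 0) γ 2 - pd3 (fun x => b x 2) γ 0,
    pd3 (fun x => b x 1) γ 0 - pd3 (fun x => b x 0) γ 1]

/-- Divergence of a vector field on ℝ³. -/
def div3 (F : V3 → V3) (γ : V3) : ℝ := ∑ i : Fin 3, pd3 (fun x => F x i) γ i

/-- Action of the diagonal matrix `A = diag (a 0, a 1, a 2)` on a vector. -/
def dvec (a x : V3) : V3 := fun i => a i * x i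

/-- Nonholonomic angular velocity of the Chaplygin sphere:
`ω = A_γ M = A M + d (γ, A M) g⁻² A γ`, with `g² = 1 - d (γ, A γ)`. -/
def omegaCh (a : V3) (d : ℝ) (γ M : V3) : V3 :=
  fun i => a i * M i + d * dot3 γ (dvec a M) * (1 - d * dot3 γ (dvec a γ))⁻¹ * (a i * γ i)

/-- The function `g(γ) = √(1 - d (γ, A γ))`. -/
def gfun (a : V3) (d : ℝ) (γ : V3) : ℝ := Real.sqrt (1 - d * dot3 γ (dvec a γ))

/-- Total mechanical energy of the Chaplygin sphere: `H = ½ (M, A_γ M) + V(γ)`. -/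
def Hch (a : V3) (d : ℝ) (V : V3 → ℝ) (p : V3 × V3) : ℝ :=
  (1 / 2) * dot3 p.2 (omegaCh a d p.1 p.2) + V p.1

/-- Divergence of a vector field on the phase space ℝ³ × ℝ³ ∋ (γ, M). -/
def divPhase (X : V3 × V3 → V3 × V3) (p : V3 × V3) : ℝ :=
  (∑ i : Fin 3, fderiv ℝ (fun q => (X q).1 i) p (Pi.single i 1, (0 : V3))) +
  (∑ i : Fin 3, fderiv ℝ (fun q => (X q).2 i) p ((0 : V3), Pi.single i 1))

/-- The totally antisymmetric symbol `ε_{ijk}` with `ε_{123} = 1`. -/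
def eps (i j k : Fin 3) : ℝ :=
  (((i : ℕ) : ℝ) - ((j : ℕ) : ℝ)) * (((j : ℕ) : ℝ) - ((k : ℕ) : ℝ)) *
    (((k : ℕ) : ℝ) - ((i : ℕ) : ℝ)) / 2

/-- Standard basis vectors of the phase space ℝ³ × ℝ³, indexed by `Fin 3 ⊕ Fin 3`
(`inl` = γ-coordinates, `inr` = M-coordinates). -/
def bvec : Fin 3 ⊕ Fin 3 → V3 × V3
  | Sum.inl i => (Pi.single i 1, 0)
  | Sum.inr i => (0, Pi.single i 1)

/-- The vector field of equations (eq-g):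
`γ̇ = γ×ω`, `Ṁ = (M + Bγ + α)×ω + (Cω − ∇V(γ))×γ`. -/
def Xeqg (B C : Matrix (Fin 3) (Fin 3) ℝ) (α : V3) (V : V3 → ℝ)
    (ω : V3 × V3 → V3) (p : V3 × V3) : V3 × V3 :=
  (cross3 p.1 (ω p),
   cross3 (p.2 + B.mulVec p.1 + α) (ω p) + cross3 (C.mulVec (ω p) - grad3 V p.1) p.1)

/-- The bivector `P_φ`: `{γ_i,γ_j} = 0`, `{M_i,γ_j} = ε_{ijk}γ_k`,
`{M_i,M_j} = ε_{ijk}(M_k + b_k(γ))`. -/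
def Pphi (b : V3 → V3) (p : V3 × V3) (r s : Fin 3 ⊕ Fin 3) : ℝ :=
  match r, s with
  | Sum.inl _, Sum.inl _ => 0
  | Sum.inr i, Sum.inl j => ∑ k, eps i j k * p.1 k
  | Sum.inl i, Sum.inr j => -(∑ k, eps j i k * p.1 k)
  | Sum.inr i, Sum.inr j => ∑ k, eps i j k * (p.2 k + b p.1 k)

/-- The bivector `P_{ψφ}`: `{γ_i,γ_j} = 0`, `{M_i,γ_j} = g ε_{ijk}γ_k`,
`{M_i,M_j} = g ε_{ijk}(M_k + b_k(γ)) − (d/g)(M, Aγ) ε_{ijk}γ_k`. -/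
def Ppsiphi (a : V3) (d : ℝ) (b : V3 → V3) (p : V3 × V3) (r s : Fin 3 ⊕ Fin 3) : ℝ :=
  match r, s with
  | Sum.inl _, Sum.inl _ => 0
  | Sum.inr i, Sum.inl j => gfun a d p.1 * ∑ k, eps i j k * p.1 k
  | Sum.inl i, Sum.inr j => -(gfun a d p.1 * ∑ k, eps j i k * p.1 k)
  | Sum.inr i, Sum.inr j =>
      gfun a d p.1 * (∑ k, eps i j k * (p.2 k + b p.1 k)) -
        d / gfun a d p.1 * dot3 p.2 (dvec a p.1) * ∑ k, eps i j k * p.1 k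

/-- The Jacobi identity expression
`Σ_l (P_{li} ∂_l P_{jk} + P_{lj} ∂_l P_{ki} + P_{lk} ∂_l P_{ij})` at a point. -/
def jacobiAt (P : V3 × V3 → (Fin 3 ⊕ Fin 3) → (Fin 3 ⊕ Fin 3) → ℝ)
    (p : V3 × V3) (i j k : Fin 3 ⊕ Fin 3) : ℝ :=
  ∑ l : Fin 3 ⊕ Fin 3,
    (P p l i * fderiv ℝ (fun q => P q j k) p (bvec l) +
     P p l j * fderiv ℝ (fun q => P q k i) p (bvec l) +
     P p l k * fderiv ℝ (fun q => P q i j) p (bvec l))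

/-- The `s`-component `{H, x_s} = Σ_r ∂H/∂x_r P_{r s}` of the Hamiltonian vector field
generated by `H` and the bivector `P`. -/
def hamVF (P : V3 × V3 → (Fin 3 ⊕ Fin 3) → (Fin 3 ⊕ Fin 3) → ℝ)
    (H : V3 × V3 → ℝ) (p : V3 × V3) (s : Fin 3 ⊕ Fin 3) : ℝ :=
  ∑ r : Fin 3 ⊕ Fin 3, fderiv ℝ H p (bvec r) * P p r s

set_option maxHeartbeats 2000000 in
/-- For the Chaplygin sphere in a solenoidal field `γ×b` (i.e. `(γ, curl b) = 0`),
the total mechanical energy `H = ½(M, A_γM) + V(γ)` is a first integral of (ch-eqm). -/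
theorem chaplygin_solenoidal_energy_first_integral
    (a : V3) (d : ℝ) (hd : 0 < d)
    (b : V3 → V3) (hb : ContDiff ℝ (⊤ : ℕ∞) b)
    (hsol : ∀ γ : V3, dot3 γ (curl3 b γ) = 0)
    (V : V3 → ℝ) (hV : ContDiff ℝ (⊤ : ℕ∞) V)
    (γ M : ℝ → V3)
    (hdom : ∀ t : ℝ, 0 < 1 - d * dot3 (γ t) (dvec a (γ t)))
    (hγ : ∀ t : ℝ, HasDerivAt γ (cross3 (γ t) (omegaCh a d (γ t) (M t))) t)
    (hM : ∀ t : ℝ, HasDerivAt M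
      (cross3 (M t + b (γ t)) (omegaCh a d (γ t) (M t)) -
        cross3 (grad3 V (γ t)) (γ t)) t)
    (t : ℝ) :
    HasDerivAt (fun s => Hch a d V (γ s, M s)) 0 t := by
  have hGne : (1 - d * dot3 (γ t) (dvec a (γ t))) ≠ 0 := ne_of_gt (hdom t)
  set ω := omegaCh a d (γ t) (M t) with hωdef
  set u := cross3 (γ t) ω with hu
  set w := cross3 (M t + b (γ t)) ω - cross3 (grad3 V (γ t)) (γ t) with hw
  have hx : ∀ i, HasDerivAt (fun s => γ s i) (u i) t := fun i => hasDerivAt_pi.mp (hγ t) i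
  have hy : ∀ i, HasDerivAt (fun s => M s i) (w i) t := fun i => hasDerivAt_pi.mp (hM t) i
  have hS : HasDerivAt (fun s => γ s 0 * (a 0 * M s 0) + γ s 1 * (a 1 * M s 1)
      + γ s 2 * (a 2 * M s 2)) _ t :=
    ((((hx 0).mul ((hy 0).const_mul (a 0))).add
      ((hx 1).mul ((hy 1).const_mul (a 1)))).add
      ((hx 2).mul ((hy 2).const_mul (a 2))))
  have hG : HasDerivAt (fun s => 1 - d * (γ s 0 * (a 0 * γ s 0) + γ s 1 * (a 1 * γ s 1)
      + γ s 2 * (a 2 * γ s 2))) _ t :=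
    (((((hx 0).mul ((hx 0).const_mul (a 0))).add
      ((hx 1).mul ((hx 1).const_mul (a 1)))).add
      ((hx 2).mul ((hx 2).const_mul (a 2)))).const_mul d).const_sub 1
  have hGne' : (1 - d * (γ t 0 * (a 0 * γ t 0) + γ t 1 * (a 1 * γ t 1)
      + γ t 2 * (a 2 * γ t 2))) ≠ 0 := by
    simpa [dot3, dvec] using hGne
  have hGi : HasDerivAt (fun s => (1 - d * (γ s 0 * (a 0 * γ s 0) + γ s 1 * (a 1 * γ s 1)
      + γ s 2 * (a 2 * γ s 2)))⁻¹)
      (d * ((u 0 * (a 0 * γ t 0) + γ t 0 * (a 0 * u 0) + (u 1 * (a 1 * γ t 1)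
          + γ t 1 * (a 1 * u 1)) + (u 2 * (a 2 * γ t 2) + γ t 2 * (a 2 * u 2)))) *
        ((1 - d * (γ t 0 * (a 0 * γ t 0) + γ t 1 * (a 1 * γ t 1)
          + γ t 2 * (a 2 * γ t 2)))⁻¹ *
         (1 - d * (γ t 0 * (a 0 * γ t 0) + γ t 1 * (a 1 * γ t 1)
          + γ t 2 * (a 2 * γ t 2)))⁻¹)) t := by
    have h := hG.inv hGne'
    refine h.congr_deriv ?_
    rw [div_eq_mul_inv]
    rw [show ((1 - d * (γ t 0 * (a 0 * γ t 0) + γ t 1 * (a 1 * γ t 1)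
      + γ t 2 * (a 2 * γ t 2))) ^ 2)⁻¹ =
      ((1 - d * (γ t 0 * (a 0 * γ t 0) + γ t 1 * (a 1 * γ t 1) + γ t 2 * (a 2 * γ t 2)))⁻¹ *
       (1 - d * (γ t 0 * (a 0 * γ t 0) + γ t 1 * (a 1 * γ t 1) + γ t 2 * (a 2 * γ t 2)))⁻¹)
      from by rw [← mul_inv]; ring_nf]
    ring
  have hR : HasDerivAt (fun s => M s 0 * (a 0 * M s 0) + M s 1 * (a 1 * M s 1)
      + M s 2 * (a 2 * M s 2)) _ t :=
    ((((hy 0).mul ((hy 0).const_mul (a 0))).add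
      ((hy 1).mul ((hy 1).const_mul (a 1)))).add
      ((hy 2).mul ((hy 2).const_mul (a 2))))
  have hVd : HasDerivAt (fun s => V (γ s))
      (u 0 * pd3 V (γ t) 0 + u 1 * pd3 V (γ t) 1 + u 2 * pd3 V (γ t) 2) t := by
    have h1 : HasDerivAt (fun s => V (γ s)) (fderiv ℝ V (γ t) u) t :=
      (hV.differentiable (by simp) (γ t)).hasFDerivAt.comp_hasDerivAt t (hγ t)
    have hdec : u = u 0 • (Pi.single (0 : Fin 3) (1:ℝ) : V3) + u 1 • (Pi.single 1 1 : V3)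
        + u 2 • (Pi.single 2 1 : V3) := by
      funext i; fin_cases i <;> simp
    rw [hdec] at h1
    simpa [pd3, mul_comm] using h1
  have hK := ((hR.add (((hS.mul hS).const_mul d).mul hGi)).const_mul ((1:ℝ)/2)).add hVd
  have hfun : (fun s => Hch a d V (γ s, M s)) = (fun s =>
      (1/2) * ((M s 0 * (a 0 * M s 0) + M s 1 * (a 1 * M s 1) + M s 2 * (a 2 * M s 2)) +
        d * ((γ s 0 * (a 0 * M s 0) + γ s 1 * (a 1 * M s 1) + γ s 2 * (a 2 * M s 2)) *
             (γ s 0 * (a 0 * M s 0) + γ s 1 * (a 1 * M s 1) + γ s 2 * (a 2 * M s 2))) *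
        (1 - d * (γ s 0 * (a 0 * γ s 0) + γ s 1 * (a 1 * γ s 1) + γ s 2 * (a 2 * γ s 2)))⁻¹)
      + V (γ s)) := by
    funext s
    simp only [Hch, dot3, dvec, omegaCh]
    ring
  have hωu : dot3 u ω = 0 := by
    rw [hu]; simp only [cross3, dot3, Matrix.cons_val_zero, Matrix.cons_val_one,
      Matrix.head_cons, Matrix.cons_val_two, Matrix.tail_cons]; ring
  have hωw : dot3 ω w = -(u 0 * pd3 V (γ t) 0 + u 1 * pd3 V (γ t) 1 + u 2 * pd3 V (γ t) 2) := by
    rw [hw, hu]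
    simp only [cross3, dot3, grad3, Pi.add_apply, Pi.sub_apply, Matrix.cons_val_zero,
      Matrix.cons_val_one, Matrix.head_cons, Matrix.cons_val_two, Matrix.tail_cons]
    ring
  rw [hfun]
  refine hK.congr_deriv ?_
  have hzero : dot3 ω w
      + (d * dot3 (γ t) (dvec a (M t)) * (1 - d * dot3 (γ t) (dvec a (γ t)))⁻¹) * dot3 u ω
      + (u 0 * pd3 V (γ t) 0 + u 1 * pd3 V (γ t) 1 + u 2 * pd3 V (γ t) 2) = 0 := by
    rw [hωu, hωw]; ring
  rw [← hzero]
  simp only [hωdef, omegaCh, dot3, dvec, Pi.mul_apply]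
  ring
end
end

section
/- Let X be the vector field on ℝ³×ℝ³ of the equations (ch-eqm): γ̇ = γ×ω, Ṁ = (M + b(γ))×ω − ∇V(γ)×γ with ω = A_γM, for an ARBITRARY smooth field b: ℝ³→ℝ³ and smooth potential V. Then div(g^{-1}X) = 0 identically on the domain g > 0; that is, μ = g^{-1} dγ dM is an invariant measure of (ch-eqm), independently of b. -/
noncomputable section

/-- The vector field of equations (ch-eqm): `γ̇ = γ×ω`, `Ṁ = (M + b(γ))×ω − ∇V(γ)×γ`
with `ω = A_γ M`. -/
def XCh (a : V3) (d : ℝ) (b : V3 → V3) (V : V3 → ℝ) (p : V3 × V3) : V3 × V3 :=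
  (cross3 p.1 (omegaCh a d p.1 p.2),
   cross3 (p.2 + b p.1) (omegaCh a d p.1 p.2) - cross3 (grad3 V p.1) p.1)

section ChapAux

private lemma fderiv_dir_fst (f : V3 × V3 → ℝ) (p : V3 × V3) (i : Fin 3) (D : ℝ)
    (hf : DifferentiableAt ℝ f p)
    (hD : HasDerivAt (fun t => f (Function.update p.1 i t, p.2)) D (p.1 i)) :
    fderiv ℝ f p (Pi.single i 1, (0 : V3)) = D := by
  have hc : HasDerivAt (fun t : ℝ => ((Function.update p.1 i t : V3), p.2))
      ((Pi.single i 1 : V3), (0 : V3)) (p.1 i) :=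
    HasDerivAt.prodMk (hasDerivAt_update p.1 i (p.1 i)) (hasDerivAt_const _ _)
  have hcomp := hf.hasFDerivAt.comp_hasDerivAt_of_eq (p.1 i) hc
    (by simp [Function.update_eq_self])
  exact hcomp.unique hD

private lemma fderiv_dir_snd (f : V3 × V3 → ℝ) (p : V3 × V3) (i : Fin 3) (D : ℝ)
    (hf : DifferentiableAt ℝ f p)
    (hD : HasDerivAt (fun t => f (p.1, Function.update p.2 i t)) D (p.2 i)) :
    fderiv ℝ f p ((0 : V3), Pi.single i 1) = D := by
  have hc : HasDerivAt (fun t : ℝ => (p.1, (Function.update p.2 i t : V3)))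
      ((0 : V3), (Pi.single i 1 : V3)) (p.2 i) :=
    HasDerivAt.prodMk (hasDerivAt_const _ _) (hasDerivAt_update p.2 i (p.2 i))
  have hcomp := hf.hasFDerivAt.comp_hasDerivAt_of_eq (p.2 i) hc
    (by simp [Function.update_eq_self])
  exact hcomp.unique hD

private lemma gderiv {S T : ℝ → ℝ} {S' T' x0 : ℝ} (u v P Q R W d : ℝ)
    (hS : HasDerivAt S S' x0) (hT : HasDerivAt T T' x0) (he : 0 < S x0) :
    HasDerivAt (fun t => (Real.sqrt (S t))⁻¹ *
        (u * (P + d * T t * (S t)⁻¹ * Q) - v * (R + d * T t * (S t)⁻¹ * W)))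
      (-(S' / (2 * Real.sqrt (S x0))) / Real.sqrt (S x0) ^ 2 *
          (u * (P + d * T x0 * (S x0)⁻¹ * Q) - v * (R + d * T x0 * (S x0)⁻¹ * W)) +
        (Real.sqrt (S x0))⁻¹ *
          (u * ((d * T' * (S x0)⁻¹ + d * T x0 * (-S' / S x0 ^ 2)) * Q) -
           v * ((d * T' * (S x0)⁻¹ + d * T x0 * (-S' / S x0 ^ 2)) * W))) x0 := by
  have h1 : Real.sqrt (S x0) ≠ 0 := Real.sqrt_ne_zero'.mpr he
  have hg := (hS.sqrt he.ne').inv h1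
  have hq := hS.inv he.ne'
  have hA := ((((hT.const_mul d).mul hq).mul_const Q).const_add P).const_mul u
  have hB := ((((hT.const_mul d).mul hq).mul_const W).const_add R).const_mul v
  exact hg.mul (hA.sub hB)

private lemma mderiv {T : ℝ → ℝ} {T' x0 : ℝ} (K c1 c2 P Q R W dd U Z : ℝ)
    (hT : HasDerivAt T T' x0) :
    HasDerivAt (fun t => K * (c1 * (P + dd * T t * U * Q) - c2 * (R + dd * T t * U * W) - Z))
      (K * (c1 * (dd * T' * U * Q) - c2 * (dd * T' * U * W))) x0 := by
  have hA := ((((hT.const_mul dd).mul_const U).mul_const Q).const_add P).const_mul c1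
  have hB := ((((hT.const_mul dd).mul_const U).mul_const W).const_add R).const_mul c2
  exact ((hA.sub hB).sub_const Z).const_mul K

end ChapAux

set_option maxHeartbeats 2000000 in
/-- For ARBITRARY smooth `b` and `V`, `div(g⁻¹ X) = 0` on the domain `g > 0`;
i.e. `μ = g⁻¹ dγ dM` is an invariant measure of (ch-eqm). -/
theorem chaplygin_solenoidal_invariant_measure
    (a : V3) (d : ℝ) (hd : 0 < d)
    (b : V3 → V3) (hb : ContDiff ℝ (⊤ : ℕ∞) b)
    (V : V3 → ℝ) (hV : ContDiff ℝ (⊤ : ℕ∞) V)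
    (p : V3 × V3) (hdom : 0 < 1 - d * dot3 p.1 (dvec a p.1)) :
    divPhase (fun q => (gfun a d q.1)⁻¹ • XCh a d b V q) p = 0 := by
  classical
  have hq1 : ∀ j : Fin 3, DifferentiableAt ℝ (fun q : V3 × V3 => q.1 j) p :=
    fun j => differentiableAt_pi.mp differentiableAt_fst j
  have hq2 : ∀ j : Fin 3, DifferentiableAt ℝ (fun q : V3 × V3 => q.2 j) p :=
    fun j => differentiableAt_pi.mp differentiableAt_snd j
  have hEpos : (0:ℝ) < 1 - d * (p.1 0 * (a 0 * p.1 0) + p.1 1 * (a 1 * p.1 1) +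
      p.1 2 * (a 2 * p.1 2)) := by
    simpa only [dot3, dvec] using hdom
  have hEne : 1 - d * dot3 p.1 (dvec a p.1) ≠ 0 := ne_of_gt hdom
  have hdot11 : DifferentiableAt ℝ (fun q : V3 × V3 => dot3 q.1 (dvec a q.1)) p := by
    simp only [dot3, dvec]
    exact (((hq1 0).mul ((hq1 0).const_mul (a 0))).add
      ((hq1 1).mul ((hq1 1).const_mul (a 1)))).add ((hq1 2).mul ((hq1 2).const_mul (a 2)))
  have hdot12 : DifferentiableAt ℝ (fun q : V3 × V3 => dot3 q.1 (dvec a q.2)) p := by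
    simp only [dot3, dvec]
    exact (((hq1 0).mul ((hq2 0).const_mul (a 0))).add
      ((hq1 1).mul ((hq2 1).const_mul (a 1)))).add ((hq1 2).mul ((hq2 2).const_mul (a 2)))
  have hE_diff : DifferentiableAt ℝ (fun q : V3 × V3 => 1 - d * dot3 q.1 (dvec a q.1)) p :=
    (differentiableAt_const (1:ℝ)).sub (hdot11.const_mul d)
  have hEinv : DifferentiableAt ℝ (fun q : V3 × V3 => (1 - d * dot3 q.1 (dvec a q.1))⁻¹) p :=
    hE_diff.inv hEne
  have hg_diff : DifferentiableAt ℝ (fun q : V3 × V3 => (gfun a d q.1)⁻¹) p := by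
    simp only [gfun]
    exact (hE_diff.sqrt hEne).inv (Real.sqrt_ne_zero'.mpr hdom)
  have hw : ∀ k : Fin 3, DifferentiableAt ℝ (fun q : V3 × V3 => omegaCh a d q.1 q.2 k) p := by
    intro k
    simp only [omegaCh]
    exact ((hq2 k).const_mul (a k)).add
      (((hdot12.const_mul d).mul hEinv).mul ((hq1 k).const_mul (a k)))
  have hb_diff : ∀ j : Fin 3, DifferentiableAt ℝ (fun q : V3 × V3 => b q.1 j) p := fun j =>
    differentiableAt_pi.mp (((hb.differentiable (by simp)) p.1).comp p differentiableAt_fst) j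
  have hV_diff : ∀ j : Fin 3, DifferentiableAt ℝ (fun q : V3 × V3 => grad3 V q.1 j) p := by
    intro j
    have h1 : ContDiff ℝ (⊤ : ℕ∞) (fun γ : V3 => fderiv ℝ V γ (Pi.single j 1)) := by
      have h0 := (ContinuousLinearMap.apply ℝ ℝ (Pi.single j 1)).contDiff.comp
        (hV.fderiv_right (m := (⊤ : ℕ∞)) (by simp))
      exact h0
    simp only [grad3, pd3]
    exact ((h1.differentiable (by simp)) p.1).comp p differentiableAt_fst
  have hD1 : ∀ j k : Fin 3, DifferentiableAt ℝ (fun q : V3 × V3 =>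
      (gfun a d q.1)⁻¹ * (q.1 j * omegaCh a d q.1 q.2 k - q.1 k * omegaCh a d q.1 q.2 j)) p :=
    fun j k => hg_diff.mul (((hq1 j).mul (hw k)).sub ((hq1 k).mul (hw j)))
  have hD2 : ∀ j k : Fin 3, DifferentiableAt ℝ (fun q : V3 × V3 =>
      (gfun a d q.1)⁻¹ * ((q.2 j + b q.1 j) * omegaCh a d q.1 q.2 k -
        (q.2 k + b q.1 k) * omegaCh a d q.1 q.2 j -
        (grad3 V q.1 j * q.1 k - grad3 V q.1 k * q.1 j))) p :=
    fun j k => hg_diff.mul (((((hq2 j).add (hb_diff j)).mul (hw k)).sub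
      (((hq2 k).add (hb_diff k)).mul (hw j))).sub
      (((hV_diff j).mul (hq1 k)).sub ((hV_diff k).mul (hq1 j))))
  have hF10 : DifferentiableAt ℝ (fun q : V3 × V3 =>
      ((gfun a d q.1)⁻¹ • XCh a d b V q).1 0) p := by
    refine (hD1 1 2).congr_of_eventuallyEq (Filter.Eventually.of_forall fun q => ?_)
    simp [XCh, cross3, Matrix.cons_val_zero, Matrix.cons_val_one, Matrix.cons_val_two,
      Matrix.head_cons, Matrix.tail_cons]
  have hF11 : DifferentiableAt ℝ (fun q : V3 × V3 =>
      ((gfun a d q.1)⁻¹ • XCh a d b V q).1 1) p := by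
    refine (hD1 2 0).congr_of_eventuallyEq (Filter.Eventually.of_forall fun q => ?_)
    simp [XCh, cross3, Matrix.cons_val_zero, Matrix.cons_val_one, Matrix.cons_val_two,
      Matrix.head_cons, Matrix.tail_cons]
  have hF12 : DifferentiableAt ℝ (fun q : V3 × V3 =>
      ((gfun a d q.1)⁻¹ • XCh a d b V q).1 2) p := by
    refine (hD1 0 1).congr_of_eventuallyEq (Filter.Eventually.of_forall fun q => ?_)
    simp [XCh, cross3, Matrix.cons_val_zero, Matrix.cons_val_one, Matrix.cons_val_two,
      Matrix.head_cons, Matrix.tail_cons]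
  have hF20 : DifferentiableAt ℝ (fun q : V3 × V3 =>
      ((gfun a d q.1)⁻¹ • XCh a d b V q).2 0) p := by
    refine (hD2 1 2).congr_of_eventuallyEq (Filter.Eventually.of_forall fun q => ?_)
    simp [XCh, cross3, Matrix.cons_val_zero, Matrix.cons_val_one, Matrix.cons_val_two,
      Matrix.head_cons, Matrix.tail_cons]
  have hF21 : DifferentiableAt ℝ (fun q : V3 × V3 =>
      ((gfun a d q.1)⁻¹ • XCh a d b V q).2 1) p := by
    refine (hD2 2 0).congr_of_eventuallyEq (Filter.Eventually.of_forall fun q => ?_)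
    simp [XCh, cross3, Matrix.cons_val_zero, Matrix.cons_val_one, Matrix.cons_val_two,
      Matrix.head_cons, Matrix.tail_cons]
  have hF22 : DifferentiableAt ℝ (fun q : V3 × V3 =>
      ((gfun a d q.1)⁻¹ • XCh a d b V q).2 2) p := by
    refine (hD2 0 1).congr_of_eventuallyEq (Filter.Eventually.of_forall fun q => ?_)
    simp [XCh, cross3, Matrix.cons_val_zero, Matrix.cons_val_one, Matrix.cons_val_two,
      Matrix.head_cons, Matrix.tail_cons]
  -- γ-direction partial derivatives
  have hid0 : HasDerivAt (fun t : ℝ => t) 1 (p.1 0) := hasDerivAt_id' _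
  have hid1 : HasDerivAt (fun t : ℝ => t) 1 (p.1 1) := hasDerivAt_id' _
  have hid2 : HasDerivAt (fun t : ℝ => t) 1 (p.1 2) := hasDerivAt_id' _
  have hS0 := ((((hid0.mul (hid0.const_mul (a 0))).add_const
      (p.1 1 * (a 1 * p.1 1))).add_const (p.1 2 * (a 2 * p.1 2))).const_mul d).const_sub 1
  have hT0 := ((hid0.mul_const (a 0 * p.2 0)).add_const
      (p.1 1 * (a 1 * p.2 1))).add_const (p.1 2 * (a 2 * p.2 2))
  have hS1 := ((((hid1.mul (hid1.const_mul (a 1))).const_add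
      (p.1 0 * (a 0 * p.1 0))).add_const (p.1 2 * (a 2 * p.1 2))).const_mul d).const_sub 1
  have hT1 := ((hid1.mul_const (a 1 * p.2 1)).const_add
      (p.1 0 * (a 0 * p.2 0))).add_const (p.1 2 * (a 2 * p.2 2))
  have hS2 := (((hid2.mul (hid2.const_mul (a 2))).const_add
      (p.1 0 * (a 0 * p.1 0) + p.1 1 * (a 1 * p.1 1))).const_mul d).const_sub 1
  have hT2 := (hid2.mul_const (a 2 * p.2 2)).const_add
      (p.1 0 * (a 0 * p.2 0) + p.1 1 * (a 1 * p.2 1))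
  have key10 := fderiv_dir_fst (fun q : V3 × V3 =>
      ((gfun a d q.1)⁻¹ • XCh a d b V q).1 0) p 0 _ hF10
    ((gderiv (p.1 1) (p.1 2) (a 2 * p.2 2) (a 2 * p.1 2) (a 1 * p.2 1) (a 1 * p.1 1) d
        hS0 hT0 hEpos).congr_of_eventuallyEq
      (Filter.Eventually.of_forall fun t => by
        simp [XCh, cross3, omegaCh, gfun, dot3, dvec, Function.update_apply,
          Matrix.cons_val_zero, Matrix.cons_val_one, Matrix.cons_val_two,
          Matrix.head_cons, Matrix.tail_cons]
        try ring))
  have key11 := fderiv_dir_fst (fun q : V3 × V3 =>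
      ((gfun a d q.1)⁻¹ • XCh a d b V q).1 1) p 1 _ hF11
    ((gderiv (p.1 2) (p.1 0) (a 0 * p.2 0) (a 0 * p.1 0) (a 2 * p.2 2) (a 2 * p.1 2) d
        hS1 hT1 hEpos).congr_of_eventuallyEq
      (Filter.Eventually.of_forall fun t => by
        simp [XCh, cross3, omegaCh, gfun, dot3, dvec, Function.update_apply,
          Matrix.cons_val_zero, Matrix.cons_val_one, Matrix.cons_val_two,
          Matrix.head_cons, Matrix.tail_cons]
        try ring))
  have key12 := fderiv_dir_fst (fun q : V3 × V3 =>
      ((gfun a d q.1)⁻¹ • XCh a d b V q).1 2) p 2 _ hF12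
    ((gderiv (p.1 0) (p.1 1) (a 1 * p.2 1) (a 1 * p.1 1) (a 0 * p.2 0) (a 0 * p.1 0) d
        hS2 hT2 hEpos).congr_of_eventuallyEq
      (Filter.Eventually.of_forall fun t => by
        simp [XCh, cross3, omegaCh, gfun, dot3, dvec, Function.update_apply,
          Matrix.cons_val_zero, Matrix.cons_val_one, Matrix.cons_val_two,
          Matrix.head_cons, Matrix.tail_cons]
        try ring))
  -- M-direction partial derivatives
  have hmid0 : HasDerivAt (fun t : ℝ => t) 1 (p.2 0) := hasDerivAt_id' _
  have hmid1 : HasDerivAt (fun t : ℝ => t) 1 (p.2 1) := hasDerivAt_id' _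
  have hmid2 : HasDerivAt (fun t : ℝ => t) 1 (p.2 2) := hasDerivAt_id' _
  have hTm0 := (((hmid0.const_mul (a 0)).const_mul (p.1 0)).add_const
      (p.1 1 * (a 1 * p.2 1))).add_const (p.1 2 * (a 2 * p.2 2))
  have hTm1 := (((hmid1.const_mul (a 1)).const_mul (p.1 1)).const_add
      (p.1 0 * (a 0 * p.2 0))).add_const (p.1 2 * (a 2 * p.2 2))
  have hTm2 := ((hmid2.const_mul (a 2)).const_mul (p.1 2)).const_add
      (p.1 0 * (a 0 * p.2 0) + p.1 1 * (a 1 * p.2 1))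
  have key20 := fderiv_dir_snd (fun q : V3 × V3 =>
      ((gfun a d q.1)⁻¹ • XCh a d b V q).2 0) p 0 _ hF20
    ((mderiv ((Real.sqrt (1 - d * (p.1 0 * (a 0 * p.1 0) + p.1 1 * (a 1 * p.1 1) +
          p.1 2 * (a 2 * p.1 2))))⁻¹) (p.2 1 + b p.1 1) (p.2 2 + b p.1 2)
        (a 2 * p.2 2) (a 2 * p.1 2) (a 1 * p.2 1) (a 1 * p.1 1) d
        ((1 - d * (p.1 0 * (a 0 * p.1 0) + p.1 1 * (a 1 * p.1 1) + p.1 2 * (a 2 * p.1 2)))⁻¹)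
        (grad3 V p.1 1 * p.1 2 - grad3 V p.1 2 * p.1 1) hTm0).congr_of_eventuallyEq
      (Filter.Eventually.of_forall fun t => by
        simp [XCh, cross3, omegaCh, gfun, dot3, dvec, Function.update_apply,
          Matrix.cons_val_zero, Matrix.cons_val_one, Matrix.cons_val_two,
          Matrix.head_cons, Matrix.tail_cons]
        try ring))
  have key21 := fderiv_dir_snd (fun q : V3 × V3 =>
      ((gfun a d q.1)⁻¹ • XCh a d b V q).2 1) p 1 _ hF21
    ((mderiv ((Real.sqrt (1 - d * (p.1 0 * (a 0 * p.1 0) + p.1 1 * (a 1 * p.1 1) +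
          p.1 2 * (a 2 * p.1 2))))⁻¹) (p.2 2 + b p.1 2) (p.2 0 + b p.1 0)
        (a 0 * p.2 0) (a 0 * p.1 0) (a 2 * p.2 2) (a 2 * p.1 2) d
        ((1 - d * (p.1 0 * (a 0 * p.1 0) + p.1 1 * (a 1 * p.1 1) + p.1 2 * (a 2 * p.1 2)))⁻¹)
        (grad3 V p.1 2 * p.1 0 - grad3 V p.1 0 * p.1 2) hTm1).congr_of_eventuallyEq
      (Filter.Eventually.of_forall fun t => by
        simp [XCh, cross3, omegaCh, gfun, dot3, dvec, Function.update_apply,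
          Matrix.cons_val_zero, Matrix.cons_val_one, Matrix.cons_val_two,
          Matrix.head_cons, Matrix.tail_cons]
        try ring))
  have key22 := fderiv_dir_snd (fun q : V3 × V3 =>
      ((gfun a d q.1)⁻¹ • XCh a d b V q).2 2) p 2 _ hF22
    ((mderiv ((Real.sqrt (1 - d * (p.1 0 * (a 0 * p.1 0) + p.1 1 * (a 1 * p.1 1) +
          p.1 2 * (a 2 * p.1 2))))⁻¹) (p.2 0 + b p.1 0) (p.2 1 + b p.1 1)
        (a 1 * p.2 1) (a 1 * p.1 1) (a 0 * p.2 0) (a 0 * p.1 0) d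
        ((1 - d * (p.1 0 * (a 0 * p.1 0) + p.1 1 * (a 1 * p.1 1) + p.1 2 * (a 2 * p.1 2)))⁻¹)
        (grad3 V p.1 0 * p.1 1 - grad3 V p.1 1 * p.1 0) hTm2).congr_of_eventuallyEq
      (Filter.Eventually.of_forall fun t => by
        simp [XCh, cross3, omegaCh, gfun, dot3, dvec, Function.update_apply,
          Matrix.cons_val_zero, Matrix.cons_val_one, Matrix.cons_val_two,
          Matrix.head_cons, Matrix.tail_cons]
        try ring))
  simp only [divPhase, Fin.sum_univ_three]
  rw [key10, key11, key12, key20, key21, key22]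
  beta_reduce
  simp only [Pi.mul_apply]
  have hGpos : 0 < Real.sqrt (1 - d * (p.1 0 * (a 0 * p.1 0) + p.1 1 * (a 1 * p.1 1) +
      p.1 2 * (a 2 * p.1 2))) := Real.sqrt_pos.mpr hEpos
  have hG2 : Real.sqrt (1 - d * (p.1 0 * (a 0 * p.1 0) + p.1 1 * (a 1 * p.1 1) +
      p.1 2 * (a 2 * p.1 2))) ^ 2 = 1 - d * (p.1 0 * (a 0 * p.1 0) + p.1 1 * (a 1 * p.1 1) +
      p.1 2 * (a 2 * p.1 2)) := Real.sq_sqrt hEpos.le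
  set G := Real.sqrt (1 - d * (p.1 0 * (a 0 * p.1 0) + p.1 1 * (a 1 * p.1 1) +
      p.1 2 * (a 2 * p.1 2))) with hGdef
  rw [← hG2]
  field_simp
  ring
end
end

section
/- Define on ℝ³×ℝ³ ∋ (γ,M) the brackets {γ_i,γ_j} = 0, {M_i,γ_j} = g ε_{ijk}γ_k, {M_i,M_j} = g ε_{ijk}(M_k + b_k(γ)) − (d/g)(M,Aγ) ε_{ijk}γ_k (the bivector P_{ψφ}), extended to smooth functions by Leibniz, and let H(γ,M) = ½(M, A_γM) + V(γ). Then the conformally Hamiltonian equations ẋ_i = g^{-1}{H, x_i} coincide exactly with the equations (ch-eqm): γ̇ = γ×ω, Ṁ = (M + b(γ))×ω − ∇V(γ)×γ, where ω = A_γM. -/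
noncomputable section
set_option maxHeartbeats 1000000

/-- The conformally Hamiltonian equations `ẋ = g⁻¹{H, x}` generated by the
bivector `P_{ψφ}` and the energy `H = ½(M, A_γM) + V(γ)` coincide with equations (ch-eqm):
`γ̇ = γ×ω`, `Ṁ = (M + b(γ))×ω − ∇V(γ)×γ`, where `ω = A_γM`. -/
theorem chaplygin_conformally_hamiltonian
    (a : V3) (d : ℝ) (hd : 0 < d)
    (b : V3 → V3) (hb : ContDiff ℝ (⊤ : ℕ∞) b)
    (V : V3 → ℝ) (hV : ContDiff ℝ (⊤ : ℕ∞) V)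
    (p : V3 × V3) (hdom : 0 < 1 - d * dot3 p.1 (dvec a p.1)) :
    (∀ i : Fin 3,
      (gfun a d p.1)⁻¹ * hamVF (Ppsiphi a d b) (Hch a d V) p (Sum.inl i) =
        cross3 p.1 (omegaCh a d p.1 p.2) i) ∧
    (∀ i : Fin 3,
      (gfun a d p.1)⁻¹ * hamVF (Ppsiphi a d b) (Hch a d V) p (Sum.inr i) =
        (cross3 (p.2 + b p.1) (omegaCh a d p.1 p.2) - cross3 (grad3 V p.1) p.1) i) := by
  
  classical
  have hQne : 1 - d * dot3 p.1 (dvec a p.1) ≠ 0 := ne_of_gt hdom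
  have hgpos : 0 < gfun a d p.1 := Real.sqrt_pos.2 hdom
  have hgne : gfun a d p.1 ≠ 0 := ne_of_gt hgpos
  have hg2 : gfun a d p.1 ^ 2 = 1 - d * dot3 p.1 (dvec a p.1) := Real.sq_sqrt hdom.le
  have hc1 : ∀ j : Fin 3, HasFDerivAt (fun q : V3 × V3 => q.1 j)
      ((ContinuousLinearMap.proj j).comp (ContinuousLinearMap.fst ℝ V3 V3)) p :=
    fun j => ((ContinuousLinearMap.proj j).comp (ContinuousLinearMap.fst ℝ V3 V3)).hasFDerivAt
  have hc2 : ∀ j : Fin 3, HasFDerivAt (fun q : V3 × V3 => q.2 j)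
      ((ContinuousLinearMap.proj j).comp (ContinuousLinearMap.snd ℝ V3 V3)) p :=
    fun j => ((ContinuousLinearMap.proj j).comp (ContinuousLinearMap.snd ℝ V3 V3)).hasFDerivAt
  have hne' : (1 - d * (p.1 0 * (a 0 * p.1 0) + p.1 1 * (a 1 * p.1 1) + p.1 2 * (a 2 * p.1 2))) ≠ 0 := by
    simpa [dot3, dvec] using hQne
  have hK := (((hc2 0).mul ((hc2 0).const_mul (a 0))).add
      ((hc2 1).mul ((hc2 1).const_mul (a 1)))).add ((hc2 2).mul ((hc2 2).const_mul (a 2)))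
  have hS := (((hc1 0).mul ((hc2 0).const_mul (a 0))).add
      ((hc1 1).mul ((hc2 1).const_mul (a 1)))).add ((hc1 2).mul ((hc2 2).const_mul (a 2)))
  have hQd := (((hc1 0).mul ((hc1 0).const_mul (a 0))).add
      ((hc1 1).mul ((hc1 1).const_mul (a 1)))).add ((hc1 2).mul ((hc1 2).const_mul (a 2)))
  have hlin := (hasFDerivAt_const (1:ℝ) p).sub (hQd.const_mul d)
  have hinv := (hasFDerivAt_inv hne').comp p hlin
  have hH0 := ((hK.add (((hS.mul hS).const_mul d).mul hinv)).const_mul ((1:ℝ)/2)).add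
      (((hV.differentiable (by simp)).differentiableAt.hasFDerivAt).comp p hasFDerivAt_fst)
  have hHeq : ∀ q : V3 × V3, Hch a d V q =
      1 / 2 * ((q.2 0 * (a 0 * q.2 0) + q.2 1 * (a 1 * q.2 1) + q.2 2 * (a 2 * q.2 2)) +
        d * ((q.1 0 * (a 0 * q.2 0) + q.1 1 * (a 1 * q.2 1) + q.1 2 * (a 2 * q.2 2)) *
             (q.1 0 * (a 0 * q.2 0) + q.1 1 * (a 1 * q.2 1) + q.1 2 * (a 2 * q.2 2))) *
        (1 - d * (q.1 0 * (a 0 * q.1 0) + q.1 1 * (a 1 * q.1 1) + q.1 2 * (a 2 * q.1 2)))⁻¹) +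
        V q.1 := by
    intro q
    simp only [Hch, dot3, omegaCh, dvec]
    ring
  have hH := hH0.congr_of_eventuallyEq (Filter.Eventually.of_forall hHeq)
  have key : ∀ v : V3 × V3, fderiv ℝ (Hch a d V) p v =
      (∑ j : Fin 3, d * dot3 p.1 (dvec a p.2) * (1 - d * dot3 p.1 (dvec a p.1))⁻¹ *
        omegaCh a d p.1 p.2 j * v.1 j)
      + (∑ j : Fin 3, omegaCh a d p.1 p.2 j * v.2 j) + fderiv ℝ V p.1 v.1 := by
    intro v
    rw [hH.fderiv]
    simp only [ContinuousLinearMap.add_apply, ContinuousLinearMap.smul_apply,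
      ContinuousLinearMap.comp_apply, ContinuousLinearMap.coe_fst', ContinuousLinearMap.coe_snd',
      ContinuousLinearMap.proj_apply, ContinuousLinearMap.smulRight_apply,
      ContinuousLinearMap.one_apply, ContinuousLinearMap.sub_apply,
      ContinuousLinearMap.zero_apply, ContinuousLinearMap.coe_smul', Pi.smul_apply,
      smul_eq_mul, omegaCh, dot3, dvec, Fin.sum_univ_three]
    simp only [ContinuousLinearMap.toSpanSingleton_apply, smul_eq_mul, Pi.mul_apply,
      Pi.add_apply, Pi.sub_apply, Function.comp_apply]
    have hQ2 : 1 - d * (a 0 * p.1 0 ^ 2 + a 1 * p.1 1 ^ 2 + a 2 * p.1 2 ^ 2) ≠ 0 := by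
      convert hne' using 2; ring
    field_simp
    ring
  have hsym : dot3 p.2 (dvec a p.1) = dot3 p.1 (dvec a p.2) := by
    simp only [dot3, dvec]; ring
  have D1 : ∀ j : Fin 3, fderiv ℝ (Hch a d V) p (bvec (Sum.inl j)) =
      d * dot3 p.1 (dvec a p.2) * (gfun a d p.1 ^ 2)⁻¹ * omegaCh a d p.1 p.2 j
        + pd3 V p.1 j := by
    intro j
    rw [key, hg2]
    fin_cases j <;>
      norm_num [bvec, pd3, Pi.single_apply, Fin.sum_univ_three]
  have D2 : ∀ j : Fin 3, fderiv ℝ (Hch a d V) p (bvec (Sum.inr j)) =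
      omegaCh a d p.1 p.2 j := by
    intro j
    rw [key]
    fin_cases j <;>
      norm_num [bvec, Pi.single_apply, Fin.sum_univ_three]
  constructor <;> intro i <;> fin_cases i <;>
    simp only [hamVF, Fintype.sum_sum_type, Fin.sum_univ_three, D1, D2, Ppsiphi, hsym,
      eps, cross3, grad3, pd3, Pi.sub_apply, Pi.add_apply, ← hg2,
      Matrix.cons_val_zero, Matrix.cons_val_one, Matrix.head_cons, Matrix.cons_val_two,
      Matrix.tail_cons] <;>
    norm_num <;>
    field_simp <;>
    ring
end
end

section
/- Let X be the vector field of the equations (eq-g) with ω = AM, where A = diag(a1,a2,a3) has pairwise distinct entries and B, α, V are arbitrary (B symmetric). Then div X = 0 identically on ℝ³×ℝ³ (i.e. the standard measure dγ dM is invariant) if and only if the symmetric matrix C is diagonal. -/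
noncomputable section

lemma dirDeriv {f : V3 × V3 → ℝ} {p v : V3 × V3} (hf : DifferentiableAt ℝ f p) {b : ℝ}
    (h : HasDerivAt (fun t : ℝ => f (p + t • v)) b 0) : fderiv ℝ f p v = b := by
  have hline : HasDerivAt (fun t : ℝ => p + t • v) v 0 := by
    simpa using ((hasDerivAt_id (0:ℝ)).smul_const v).const_add p
  have h2 : HasDerivAt (fun t : ℝ => f (p + t • v)) (fderiv ℝ f p v) 0 := by
    have := HasFDerivAt.comp_hasDerivAt (x := (0:ℝ)) (by simpa using hf.hasFDerivAt) hline
    exact this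
  exact h2.unique h

lemma affineDeriv (c b : ℝ) : HasDerivAt (fun t : ℝ => c + b * t) b 0 := by
  simpa using ((hasDerivAt_id (0:ℝ)).const_mul b).const_add c

section DivComp

variable (a : V3) (B C : Matrix (Fin 3) (Fin 3) ℝ) (α : V3) (V : V3 → ℝ)

lemma gradDiff (hV : ContDiff ℝ (⊤ : ℕ∞) V) (j : Fin 3) :
    Differentiable ℝ (fun q : V3 × V3 => fderiv ℝ V q.1 (Pi.single j 1)) :=
  ((hV.fderiv_right (m := 1) (by exact WithTop.coe_le_coe.mpr le_top)).differentiable one_ne_zero |>.clm_apply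
    (differentiable_const _)).comp differentiable_fst

lemma divX (hV : ContDiff ℝ (⊤ : ℕ∞) V) (p : V3 × V3) :
    divPhase (Xeqg B C α V (fun q => dvec a q.2)) p =
      (a 1 * C 2 1 - a 2 * C 1 2) * p.1 0 + (a 2 * C 0 2 - a 0 * C 2 0) * p.1 1 +
        (a 0 * C 1 0 - a 1 * C 0 1) * p.1 2 := by
  have h0 := gradDiff V hV 0
  have h1 := gradDiff V hV 1
  have h2 := gradDiff V hV 2
  have hd1 : ∀ i : Fin 3,
      Differentiable ℝ (fun q : V3 × V3 => (Xeqg B C α V (fun q => dvec a q.2) q).1 i) := by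
    have t0 : Differentiable ℝ (fun q : V3 × V3 => (Xeqg B C α V (fun q => dvec a q.2) q).1 0) := by
      simp only [Xeqg, cross3, dvec, grad3, pd3, Matrix.mulVec, dotProduct,
        Fin.sum_univ_three, Pi.add_apply, Pi.sub_apply, Matrix.cons_val_zero,
        Matrix.cons_val_one, Matrix.head_cons, Matrix.cons_val_two, Matrix.tail_cons]
      fun_prop
    have t1 : Differentiable ℝ (fun q : V3 × V3 => (Xeqg B C α V (fun q => dvec a q.2) q).1 1) := by
      simp only [Xeqg, cross3, dvec, grad3, pd3, Matrix.mulVec, dotProduct,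
        Fin.sum_univ_three, Pi.add_apply, Pi.sub_apply, Matrix.cons_val_zero,
        Matrix.cons_val_one, Matrix.head_cons, Matrix.cons_val_two, Matrix.tail_cons]
      fun_prop
    have t2 : Differentiable ℝ (fun q : V3 × V3 => (Xeqg B C α V (fun q => dvec a q.2) q).1 2) := by
      simp only [Xeqg, cross3, dvec, grad3, pd3, Matrix.mulVec, dotProduct,
        Fin.sum_univ_three, Pi.add_apply, Pi.sub_apply, Matrix.cons_val_zero,
        Matrix.cons_val_one, Matrix.head_cons, Matrix.cons_val_two, Matrix.tail_cons]
      fun_prop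
    intro i
    fin_cases i
    · exact t0
    · exact t1
    · exact t2
  have hd2 : ∀ i : Fin 3,
      Differentiable ℝ (fun q : V3 × V3 => (Xeqg B C α V (fun q => dvec a q.2) q).2 i) := by
    have t0 : Differentiable ℝ (fun q : V3 × V3 => (Xeqg B C α V (fun q => dvec a q.2) q).2 0) := by
      simp only [Xeqg, cross3, dvec, grad3, pd3, Matrix.mulVec, dotProduct,
        Fin.sum_univ_three, Pi.add_apply, Pi.sub_apply, Matrix.cons_val_zero,
        Matrix.cons_val_one, Matrix.head_cons, Matrix.cons_val_two, Matrix.tail_cons]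
      fun_prop
    have t1 : Differentiable ℝ (fun q : V3 × V3 => (Xeqg B C α V (fun q => dvec a q.2) q).2 1) := by
      simp only [Xeqg, cross3, dvec, grad3, pd3, Matrix.mulVec, dotProduct,
        Fin.sum_univ_three, Pi.add_apply, Pi.sub_apply, Matrix.cons_val_zero,
        Matrix.cons_val_one, Matrix.head_cons, Matrix.cons_val_two, Matrix.tail_cons]
      fun_prop
    have t2 : Differentiable ℝ (fun q : V3 × V3 => (Xeqg B C α V (fun q => dvec a q.2) q).2 2) := by
      simp only [Xeqg, cross3, dvec, grad3, pd3, Matrix.mulVec, dotProduct,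
        Fin.sum_univ_three, Pi.add_apply, Pi.sub_apply, Matrix.cons_val_zero,
        Matrix.cons_val_one, Matrix.head_cons, Matrix.cons_val_two, Matrix.tail_cons]
      fun_prop
    intro i
    fin_cases i
    · exact t0
    · exact t1
    · exact t2
  have key : ∀ (i : Fin 3) (b : ℝ) (v : V3 × V3)
      (hdiff : DifferentiableAt ℝ (fun q : V3 × V3 => (Xeqg B C α V (fun q => dvec a q.2) q).2 i) p)
      (h : (fun t : ℝ => (Xeqg B C α V (fun q => dvec a q.2) (p + t • v)).2 i)
        = fun t => (Xeqg B C α V (fun q => dvec a q.2) p).2 i + b * t),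
      fderiv ℝ (fun q : V3 × V3 => (Xeqg B C α V (fun q => dvec a q.2) q).2 i) p v = b := by
    intro i b v hdiff h
    exact dirDeriv hdiff (by rw [h]; exact affineDeriv _ b)
  have key1 : ∀ (i : Fin 3) (v : V3 × V3)
      (hdiff : DifferentiableAt ℝ (fun q : V3 × V3 => (Xeqg B C α V (fun q => dvec a q.2) q).1 i) p)
      (h : (fun t : ℝ => (Xeqg B C α V (fun q => dvec a q.2) (p + t • v)).1 i)
        = fun t => (Xeqg B C α V (fun q => dvec a q.2) p).1 i + 0 * t),
      fderiv ℝ (fun q : V3 × V3 => (Xeqg B C α V (fun q => dvec a q.2) q).1 i) p v = 0 := by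
    intro i v hdiff h
    exact dirDeriv hdiff (by rw [h]; exact affineDeriv _ 0)
  have E10 := key1 0 ((Pi.single 0 1 : V3), (0:V3)) ((hd1 0) p) (by
    funext t
    simp [Xeqg, cross3, dvec, grad3, pd3, Matrix.mulVec, dotProduct, Fin.sum_univ_three,
      Prod.fst_add, Prod.snd_add, Prod.smul_fst, Prod.smul_snd, Pi.add_apply, Pi.sub_apply,
      Pi.smul_apply, smul_eq_mul, Matrix.cons_val_zero, Matrix.cons_val_one, Matrix.head_cons,
      Pi.single_eq_same, Pi.single_eq_of_ne]
    try ring)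
  have E11 := key1 1 ((Pi.single 1 1 : V3), (0:V3)) ((hd1 1) p) (by
    funext t
    simp [Xeqg, cross3, dvec, grad3, pd3, Matrix.mulVec, dotProduct, Fin.sum_univ_three,
      Prod.fst_add, Prod.snd_add, Prod.smul_fst, Prod.smul_snd, Pi.add_apply, Pi.sub_apply,
      Pi.smul_apply, smul_eq_mul, Matrix.cons_val_zero, Matrix.cons_val_one, Matrix.head_cons,
      Pi.single_eq_same, Pi.single_eq_of_ne]
    try ring)
  have E12 := key1 2 ((Pi.single 2 1 : V3), (0:V3)) ((hd1 2) p) (by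
    funext t
    simp [Xeqg, cross3, dvec, grad3, pd3, Matrix.mulVec, dotProduct, Fin.sum_univ_three,
      Prod.fst_add, Prod.snd_add, Prod.smul_fst, Prod.smul_snd, Pi.add_apply, Pi.sub_apply,
      Pi.smul_apply, smul_eq_mul, Matrix.cons_val_zero, Matrix.cons_val_one, Matrix.head_cons,
      Pi.single_eq_same, Pi.single_eq_of_ne]
    try ring)
  have E20 := key 0 (C 1 0 * a 0 * p.1 2 - C 2 0 * a 0 * p.1 1)
    ((0:V3), (Pi.single 0 1 : V3)) ((hd2 0) p) (by
    funext t
    simp [Xeqg, cross3, dvec, grad3, pd3, Matrix.mulVec, dotProduct, Fin.sum_univ_three,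
      Prod.fst_add, Prod.snd_add, Prod.smul_fst, Prod.smul_snd, Pi.add_apply, Pi.sub_apply,
      Pi.smul_apply, smul_eq_mul, Matrix.cons_val_zero, Matrix.cons_val_one, Matrix.head_cons,
      Pi.single_eq_same, Pi.single_eq_of_ne]
    try ring)
  have E21 := key 1 (C 2 1 * a 1 * p.1 0 - C 0 1 * a 1 * p.1 2)
    ((0:V3), (Pi.single 1 1 : V3)) ((hd2 1) p) (by
    funext t
    simp [Xeqg, cross3, dvec, grad3, pd3, Matrix.mulVec, dotProduct, Fin.sum_univ_three,
      Prod.fst_add, Prod.snd_add, Prod.smul_fst, Prod.smul_snd, Pi.add_apply, Pi.sub_apply,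
      Pi.smul_apply, smul_eq_mul, Matrix.cons_val_zero, Matrix.cons_val_one, Matrix.head_cons,
      Pi.single_eq_same, Pi.single_eq_of_ne]
    try ring)
  have E22 := key 2 (C 0 2 * a 2 * p.1 1 - C 1 2 * a 2 * p.1 0)
    ((0:V3), (Pi.single 2 1 : V3)) ((hd2 2) p) (by
    funext t
    simp [Xeqg, cross3, dvec, grad3, pd3, Matrix.mulVec, dotProduct, Fin.sum_univ_three,
      Prod.fst_add, Prod.snd_add, Prod.smul_fst, Prod.smul_snd, Pi.add_apply, Pi.sub_apply,
      Pi.smul_apply, smul_eq_mul, Matrix.cons_val_zero, Matrix.cons_val_one, Matrix.head_cons,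
      Pi.single_eq_same, Pi.single_eq_of_ne]
    try ring)
  rw [divPhase, Fin.sum_univ_three, Fin.sum_univ_three, E10, E11, E12, E20, E21, E22]
  ring

end DivComp

/-- For (eq-g) with `ω = AM`, `A = diag(a1,a2,a3)` with pairwise distinct
entries and arbitrary symmetric `B`, vector `α` and smooth potential `V`, the standard
measure `dγ dM` is invariant (`div X = 0` identically) iff `C` is diagonal. -/
theorem eqg_invariant_measure_iff_C_diagonal
    (a : V3) (h01 : a 0 ≠ a 1) (h02 : a 0 ≠ a 2) (h12 : a 1 ≠ a 2)
    (B C : Matrix (Fin 3) (Fin 3) ℝ) (hB : B.IsSymm) (hC : C.IsSymm)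
    (α : V3) (V : V3 → ℝ) (hV : ContDiff ℝ (⊤ : ℕ∞) V) :
    (∀ p : V3 × V3, divPhase (Xeqg B C α V (fun q => dvec a q.2)) p = 0) ↔
      (∀ i j : Fin 3, i ≠ j → C i j = 0) := by
  have hsym : ∀ i j : Fin 3, C j i = C i j := fun i j => hC.apply i j
  constructor
  · intro hdiv i j hij
    have hx : ∀ k : Fin 3, divPhase (Xeqg B C α V (fun q => dvec a q.2))
        ((Pi.single k 1 : V3), (0:V3)) = 0 := fun k => hdiv _
    have e0 := hx 0
    have e1 := hx 1
    have e2 := hx 2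
    rw [divX a B C α V hV] at e0 e1 e2
    simp [Pi.single_eq_same, Pi.single_eq_of_ne] at e0 e1 e2
    have c12 : C 1 2 = 0 := by
      have h : (a 1 - a 2) * C 1 2 = 0 := by
        rw [hsym 1 2] at e0; linarith
      exact (mul_eq_zero.mp h).resolve_left (sub_ne_zero.mpr h12)
    have c02 : C 0 2 = 0 := by
      have h : (a 2 - a 0) * C 2 0 = 0 := by
        rw [← hsym 0 2] at e1; linarith
      have h20 : C 2 0 = 0 :=
        (mul_eq_zero.mp h).resolve_left (sub_ne_zero.mpr (Ne.symm h02))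
      exact (hsym 0 2).symm.trans h20
    have c01 : C 0 1 = 0 := by
      have h : (a 0 - a 1) * C 1 0 = 0 := by
        rw [← hsym 0 1] at e2; linarith
      have h10 : C 1 0 = 0 := (mul_eq_zero.mp h).resolve_left (sub_ne_zero.mpr h01)
      exact (hsym 0 1).symm.trans h10
    fin_cases i <;> fin_cases j <;> simp_all <;>
      first
        | exact c01 | exact c02 | exact c12
        | (rw [hsym 0 1]; exact c01) | (rw [hsym 0 2]; exact c02) | (rw [hsym 1 2]; exact c12)
  · intro hCd p
    rw [divX a B C α V hV]
    have c12 := hCd 1 2 (by decide)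
    have c21 := hCd 2 1 (by decide)
    have c02 := hCd 0 2 (by decide)
    have c20 := hCd 2 0 (by decide)
    have c01 := hCd 0 1 (by decide)
    have c10 := hCd 1 0 (by decide)
    rw [c12, c21, c02, c20, c01, c10]
    ring
end
end

section
/- Let X be the vector field of the equations (eq-g) with the nonholonomic angular velocity ω = A_γM, where A = diag(a1,a2,a3) has pairwise distinct nonzero entries, d > 0, and B, α, V are arbitrary (B symmetric). Then div(g^{-1}X) = 0 identically on the domain g > 0 (i.e. μ = g^{-1} dγ dM, g = √(1 − d(γ,Aγ)), is an invariant measure) if and only if the symmetric matrix C is diagonal, C = diag(c1,c2,c3), with entries satisfying the Clebsch-type condition (c2 − c3)/a1 + (c3 − c1)/a2 + (c1 − c2)/a3 = 0. -/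
noncomputable section

set_option maxHeartbeats 2000000 in
theorem keylem (a : V3) (d : ℝ) (B C : Matrix (Fin 3) (Fin 3) ℝ) (α : V3) (V : V3 → ℝ)
    (hV : ContDiff ℝ (⊤ : ℕ∞) V) (p : V3 × V3) (hU : 0 < 1 - d * dot3 p.1 (dvec a p.1)) :
    divPhase (fun q => (gfun a d q.1)⁻¹ •
        Xeqg B C α V (fun q' => omegaCh a d q'.1 q'.2) q) p =
      (gfun a d p.1)⁻¹ * (((a 0 * C 1 0 - a 1 * C 0 1) * p.1 2 +
          (a 1 * C 2 1 - a 2 * C 1 2) * p.1 0 + (a 2 * C 0 2 - a 0 * C 2 0) * p.1 1) +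
        d * (1 - d * dot3 p.1 (dvec a p.1))⁻¹ *
          dot3 (cross3 (dvec a p.1) (C.mulVec (dvec a p.1))) p.1) := by
  simp only [dot3, dvec] at hU
  have hx : ∀ i : Fin 3, HasFDerivAt (fun q : V3 × V3 => q.1 i)
      ((ContinuousLinearMap.proj i).comp (ContinuousLinearMap.fst ℝ V3 V3)) p :=
    fun i => ((ContinuousLinearMap.proj i).comp (ContinuousLinearMap.fst ℝ V3 V3)).hasFDerivAt
  have hy : ∀ i : Fin 3, HasFDerivAt (fun q : V3 × V3 => q.2 i)
      ((ContinuousLinearMap.proj i).comp (ContinuousLinearMap.snd ℝ V3 V3)) p :=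
    fun i => ((ContinuousLinearMap.proj i).comp (ContinuousLinearMap.snd ℝ V3 V3)).hasFDerivAt
  have hUne : (1 - d * (p.1 0 * (a 0 * p.1 0) + p.1 1 * (a 1 * p.1 1) + p.1 2 * (a 2 * p.1 2))) ≠ 0 :=
    ne_of_gt hU
  have hU1 := (hasFDerivAt_const (1:ℝ) p).sub
    (((((hx 0).mul ((hx 0).const_mul (a 0))).add ((hx 1).mul ((hx 1).const_mul (a 1)))).add
      ((hx 2).mul ((hx 2).const_mul (a 2)))).const_mul d)
  have hUinv := (hasDerivAt_inv hUne).comp_hasFDerivAt p hU1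
  simp only [Function.comp_def] at hUinv
  have hsne : Real.sqrt (1 - d * (p.1 0 * (a 0 * p.1 0) + p.1 1 * (a 1 * p.1 1) + p.1 2 * (a 2 * p.1 2))) ≠ 0 :=
    ne_of_gt (Real.sqrt_pos.mpr hU)
  have hG := (hasDerivAt_inv hsne).comp_hasFDerivAt p (hU1.sqrt hUne)
  simp only [Function.comp_def] at hG
  have hm := (((hx 0).mul ((hy 0).const_mul (a 0))).add ((hx 1).mul ((hy 1).const_mul (a 1)))).add
      ((hx 2).mul ((hy 2).const_mul (a 2)))
  have hw := fun k : Fin 3 => ((hy k).const_mul (a k)).add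
      ((((hm.const_mul d).mul hUinv).mul ((hx k).const_mul (a k))))
  have hVd : ContDiff ℝ 1 (fderiv ℝ V) := hV.fderiv_right (by exact WithTop.coe_le_coe.mpr (le_top : (1 + 1 : ℕ∞) ≤ ⊤))
  have hV' : ∀ j : Fin 3, HasFDerivAt (fun q : V3 × V3 => (fderiv ℝ V q.1) (Pi.single j 1))
      ((fderiv ℝ (fun γ : V3 => (fderiv ℝ V γ) (Pi.single j 1)) p.1).comp
        (ContinuousLinearMap.fst ℝ V3 V3)) p := by
    intro j
    have hda : DifferentiableAt ℝ (fun γ : V3 => (fderiv ℝ V γ) (Pi.single j 1)) p.1 :=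
      ((hVd.clm_apply contDiff_const).differentiable one_ne_zero).differentiableAt
    have h2 := hda.hasFDerivAt.comp p hasFDerivAt_fst
    simpa [Function.comp_def] using h2
  have hb := fun j : Fin 3 => (((hy j).add ((((hx 0).const_mul (B j 0)).add
      ((hx 1).const_mul (B j 1))).add ((hx 2).const_mul (B j 2)))).add_const (α j))
  have hc := fun j : Fin 3 => ((((hw 0).const_mul (C j 0)).add ((hw 1).const_mul (C j 1))).add
      ((hw 2).const_mul (C j 2))).sub (hV' j)
  have h10 := hG.mul (((hx 1).mul (hw 2)).sub ((hx 2).mul (hw 1)))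
  have h11 := hG.mul (((hx 2).mul (hw 0)).sub ((hx 0).mul (hw 2)))
  have h12 := hG.mul (((hx 0).mul (hw 1)).sub ((hx 1).mul (hw 0)))
  have h20 := hG.mul ((((hb 1).mul (hw 2)).sub ((hb 2).mul (hw 1))).add
      (((hc 1).mul (hx 2)).sub ((hc 2).mul (hx 1))))
  have h21 := hG.mul ((((hb 2).mul (hw 0)).sub ((hb 0).mul (hw 2))).add
      (((hc 2).mul (hx 0)).sub ((hc 0).mul (hx 2))))
  have h22 := hG.mul ((((hb 0).mul (hw 1)).sub ((hb 1).mul (hw 0))).add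
      (((hc 0).mul (hx 1)).sub ((hc 1).mul (hx 0))))
  simp only [divPhase, Fin.sum_univ_three, Xeqg, Prod.smul_fst, Prod.smul_snd, Pi.smul_apply,
    smul_eq_mul, cross3, omegaCh, gfun, dot3, dvec, grad3, pd3, Matrix.mulVec, Matrix.cons_val',
    Matrix.cons_val_zero, Matrix.cons_val_one, Matrix.head_cons, Matrix.empty_val',
    Matrix.cons_val_fin_one, Matrix.head_fin_const, Matrix.cons_val_two, Matrix.tail_cons,
    Pi.add_apply, Pi.sub_apply, dotProduct, Fin.isValue]
  simp only [Pi.mul_def, Pi.add_def, Pi.sub_def, Pi.inv_def] at h10 h11 h12 h20 h21 h22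
  rw [h10.fderiv, h11.fderiv, h12.fderiv, h20.fderiv, h21.fderiv, h22.fderiv]
  simp only [ContinuousLinearMap.add_apply, ContinuousLinearMap.sub_apply,
    ContinuousLinearMap.smul_apply, ContinuousLinearMap.coe_comp', Function.comp_apply,
    ContinuousLinearMap.proj_apply, ContinuousLinearMap.coe_fst', ContinuousLinearMap.coe_snd',
    ContinuousLinearMap.zero_apply, ContinuousLinearMap.neg_apply, map_zero, smul_eq_mul,
    Pi.single_eq_same, ne_eq, Pi.single_apply, Prod.fst_zero, Prod.snd_zero, Pi.zero_apply]
  simp only [Fin.reduceEq, reduceIte, add_zero, zero_add, mul_zero, zero_mul, mul_one]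
  simp only [Real.sq_sqrt hU.le]
  generalize hgen : (1 - d * (p.1 0 * (a 0 * p.1 0) + p.1 1 * (a 1 * p.1 1) + p.1 2 * (a 2 * p.1 2))) = u at hU hUne hsne ⊢
  generalize hs : Real.sqrt u = s at hsne ⊢
  have hs2 : s ^ 2 = u := by rw [← hs]; exact Real.sq_sqrt hU.le
  rw [← hs2] at hUne ⊢
  field_simp
  ring

/-- For (eq-g) with the nonholonomic angular velocity `ω = A_γM`
(`A` with pairwise distinct nonzero entries, `d > 0`) and arbitrary symmetric `B`, `α`, `V`,
the measure `μ = g⁻¹ dγ dM` is invariant on the domain `g > 0` iff `C` is diagonal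
with entries satisfying the Clebsch-type condition
`(c2 − c3)/a1 + (c3 − c1)/a2 + (c1 − c2)/a3 = 0`. -/
theorem eqg_nonholonomic_invariant_measure_iff
    (a : V3) (h01 : a 0 ≠ a 1) (h02 : a 0 ≠ a 2) (h12 : a 1 ≠ a 2)
    (ha : ∀ i, a i ≠ 0) (d : ℝ) (hd : 0 < d)
    (B C : Matrix (Fin 3) (Fin 3) ℝ) (hB : B.IsSymm) (hC : C.IsSymm)
    (α : V3) (V : V3 → ℝ) (hV : ContDiff ℝ (⊤ : ℕ∞) V) :
    (∀ p : V3 × V3, 0 < 1 - d * dot3 p.1 (dvec a p.1) →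
        divPhase (fun q => (gfun a d q.1)⁻¹ •
          Xeqg B C α V (fun q' => omegaCh a d q'.1 q'.2) q) p = 0) ↔
      ((∀ i j : Fin 3, i ≠ j → C i j = 0) ∧
        (C 1 1 - C 2 2) / a 0 + (C 2 2 - C 0 0) / a 1 + (C 0 0 - C 1 1) / a 2 = 0) := by
  have hCs : ∀ i j : Fin 3, C j i = C i j := by
    intro i j
    have := congrFun (congrFun hC.eq i) j
    simpa [Matrix.transpose_apply] using this
  constructor
  · intro h
    have key2 : ∀ p : V3 × V3, 0 < 1 - d * dot3 p.1 (dvec a p.1) →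
        ((a 0 * C 1 0 - a 1 * C 0 1) * p.1 2 +
          (a 1 * C 2 1 - a 2 * C 1 2) * p.1 0 + (a 2 * C 0 2 - a 0 * C 2 0) * p.1 1) +
        d * (1 - d * dot3 p.1 (dvec a p.1))⁻¹ *
          dot3 (cross3 (dvec a p.1) (C.mulVec (dvec a p.1))) p.1 = 0 := by
      intro p hU
      have h1 := (keylem a d B C α V hV p hU).symm.trans (h p hU)
      have hg : gfun a d p.1 ≠ 0 := by
        simp only [gfun]; exact ne_of_gt (Real.sqrt_pos.mpr hU)
      rcases mul_eq_zero.mp h1 with h2 | h2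
      · exact absurd (inv_eq_zero.mp h2) hg
      · exact h2
    obtain ⟨S, hSdef⟩ : ∃ S : ℝ, S = |a 0| + |a 1| + |a 2| := ⟨_, rfl⟩
    have hS : 0 < S := by
      rw [hSdef]
      have := abs_pos.mpr (ha 0)
      have := abs_nonneg (a 1); have := abs_nonneg (a 2); positivity
    obtain ⟨τ, hτdef⟩ : ∃ t : ℝ, t = (1 + d * S)⁻¹ := ⟨_, rfl⟩
    have hτ : 0 < τ := by rw [hτdef]; positivity
    have hbound : d * S * τ ^ 2 < 1 := by
      have hpos : (0:ℝ) < 1 + d * S := by positivity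
      have h2 : d * S < (1 + d * S) ^ 2 := by nlinarith
      calc d * S * τ ^ 2 = d * S / (1 + d * S) ^ 2 := by rw [hτdef]; field_simp
        _ < 1 := (div_lt_one (by positivity)).mpr h2
    have habs0 : a 0 ≤ S := by
      have := le_abs_self (a 0); have := abs_nonneg (a 1); have := abs_nonneg (a 2)
      rw [hSdef]; linarith
    have habs1 : a 1 ≤ S := by
      have := le_abs_self (a 1); have := abs_nonneg (a 0); have := abs_nonneg (a 2)
      rw [hSdef]; linarith
    have habs2 : a 2 ≤ S := by
      have := le_abs_self (a 2); have := abs_nonneg (a 0); have := abs_nonneg (a 1)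
      rw [hSdef]; linarith
    have habs : ∀ i : Fin 3, a i ≤ S := by
      intro i; fin_cases i; exacts [habs0, habs1, habs2]
    -- off-diagonal conditions from points γ = single i τ
    have hsingle : ∀ i : Fin 3, 0 < 1 - d * dot3 (Pi.single i τ) (dvec a (Pi.single i τ)) := by
      intro i
      have hτ2 : (0:ℝ) < τ ^ 2 := by positivity
      have hai := habs i
      have : dot3 (Pi.single i τ) (dvec a (Pi.single i τ)) = a i * τ ^ 2 := by
        fin_cases i <;> simp [dot3, dvec, Pi.single_apply] <;> ring
      rw [this]
      nlinarith [mul_le_mul_of_nonneg_left (mul_le_mul_of_nonneg_right hai hτ2.le) hd.le]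
    have e0 := key2 (Pi.single 0 τ, 0) (hsingle 0)
    have e1 := key2 (Pi.single 1 τ, 0) (hsingle 1)
    have e2 := key2 (Pi.single 2 τ, 0) (hsingle 2)
    simp [dot3, dvec, cross3, Matrix.mulVec, dotProduct, Pi.single_apply,
      Fin.sum_univ_three] at e0 e1 e2
    have hτne : τ ≠ 0 := ne_of_gt hτ
    have f0 := e0.resolve_right hτne
    have f1 := e1.resolve_right hτne
    have f2 := e2.resolve_right hτne
    rw [hCs 1 2] at f0
    rw [hCs 0 2] at f1
    rw [hCs 0 1] at f2
    have hc12 : C 1 2 = 0 := by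
      have h' : C 1 2 * (a 1 - a 2) = 0 := by linear_combination f0
      exact (mul_eq_zero.mp h').resolve_right (sub_ne_zero.mpr h12)
    have hc02 : C 0 2 = 0 := by
      have h' : C 0 2 * (a 2 - a 0) = 0 := by linear_combination f1
      exact (mul_eq_zero.mp h').resolve_right (sub_ne_zero.mpr h02.symm)
    have hc01 : C 0 1 = 0 := by
      have h' : C 0 1 * (a 0 - a 1) = 0 := by linear_combination f2
      exact (mul_eq_zero.mp h').resolve_right (sub_ne_zero.mpr h01)
    have hc21 : C 2 1 = 0 := (hCs 1 2).trans hc12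
    have hc20 : C 2 0 = 0 := (hCs 0 2).trans hc02
    have hc10 : C 1 0 = 0 := (hCs 0 1).trans hc01
    have hdiag : ∀ i j : Fin 3, i ≠ j → C i j = 0 := by
      intro i j hij
      fin_cases i <;> fin_cases j <;>
        first
          | exact absurd rfl hij
          | assumption
    refine ⟨hdiag, ?_⟩
    have hUc : 0 < 1 - d * dot3 (fun _ => τ) (dvec a fun _ => τ) := by
      have hτ2 : (0:ℝ) < τ ^ 2 := by positivity
      have heq : dot3 (fun _ => τ) (dvec a fun _ => τ) = (a 0 + a 1 + a 2) * τ ^ 2 := by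
        simp [dot3, dvec]; ring
      rw [heq]
      have hsum : a 0 + a 1 + a 2 ≤ S := by
        rw [hSdef]; linarith [le_abs_self (a 0), le_abs_self (a 1), le_abs_self (a 2)]
      have hle := mul_le_mul_of_nonneg_left
        (mul_le_mul_of_nonneg_right hsum hτ2.le) hd.le
      linarith [hle, hbound, (by ring : d * (S * τ ^ 2) = d * S * τ ^ 2)]
    have ec := key2 ((fun _ => τ), 0) hUc
    simp [dot3, dvec, cross3, Matrix.mulVec, dotProduct, Fin.sum_univ_three,
      hc01, hc02, hc10, hc12, hc20, hc21] at ec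
    have hU' : 1 - d * (τ * (a 0 * τ) + τ * (a 1 * τ) + τ * (a 2 * τ)) ≠ 0 := by
      simp only [dot3, dvec] at hUc
      exact ne_of_gt hUc
    have g := ec.resolve_left (by push_neg; exact ⟨hd.ne', hU'⟩)
    have h3 : (a 1 * a 2 * (C 2 2 - C 1 1) + a 2 * a 0 * (C 0 0 - C 2 2) +
        a 0 * a 1 * (C 1 1 - C 0 0)) * τ ^ 3 = 0 := by linear_combination g
    have hbr := (mul_eq_zero.mp h3).resolve_right (pow_ne_zero 3 hτne)
    have hrw : (C 1 1 - C 2 2) / a 0 + (C 2 2 - C 0 0) / a 1 + (C 0 0 - C 1 1) / a 2 =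
        (-(a 1 * a 2 * (C 2 2 - C 1 1) + a 2 * a 0 * (C 0 0 - C 2 2) +
          a 0 * a 1 * (C 1 1 - C 0 0))) / (a 0 * (a 1 * a 2)) := by
      field_simp [ha 0, ha 1, ha 2]
      ring
    rw [hrw, hbr, neg_zero, zero_div]
  · rintro ⟨hdiag, hcleb⟩ p hU
    rw [keylem a d B C α V hV p hU]
    rw [hdiag 1 0 (by decide), hdiag 0 1 (by decide), hdiag 2 1 (by decide),
      hdiag 1 2 (by decide), hdiag 0 2 (by decide), hdiag 2 0 (by decide)]
    have hΔ : dot3 (cross3 (dvec a p.1) (C.mulVec (dvec a p.1))) p.1 = 0 := by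
      simp only [dot3, dvec, cross3, Matrix.mulVec, dotProduct, Fin.sum_univ_three,
        Matrix.cons_val_zero, Matrix.cons_val_one, Matrix.head_cons, Matrix.cons_val_two,
        Matrix.tail_cons, Fin.isValue]
      rw [hdiag 1 0 (by decide), hdiag 0 1 (by decide), hdiag 2 1 (by decide),
        hdiag 1 2 (by decide), hdiag 0 2 (by decide), hdiag 2 0 (by decide)]
      field_simp [ha 0, ha 1, ha 2] at hcleb
      linear_combination (-(p.1 0 * p.1 1 * p.1 2)) * hcleb
    rw [hΔ]
    ring
end
end

section
/- Let X be the vector field of the equations (eq-g) with ω = AM, where A = diag(a1,a2,a3) is invertible (a_i ≠ 0), and B symmetric, α ∈ ℝ³, smooth V arbitrary. Then the total mechanical energy H(γ,M) = ½(M, AM) + V(γ) is a first integral of (eq-g) (i.e. X(H) = 0 identically on ℝ³×ℝ³) if and only if the symmetric matrix C is a scalar multiple of the identity, C = λE for some λ ∈ ℝ. -/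
noncomputable section

lemma lin3 (L : V3 →L[ℝ] ℝ) (u : V3) :
    L u = u 0 * L (Pi.single 0 1) + u 1 * L (Pi.single 1 1) + u 2 * L (Pi.single 2 1) := by
  have hu : u = u 0 • (Pi.single 0 1 : V3) + u 1 • (Pi.single 1 1 : V3) + u 2 • (Pi.single 2 1 : V3) := by
    funext i; fin_cases i <;> simp [Pi.single_apply]
  rw [hu]; simp [smul_eq_mul]

lemma energy_fderiv (a : V3) (V : V3 → ℝ) (hV : ContDiff ℝ (⊤ : ℕ∞) V) (p : V3 × V3) (v : V3 × V3) :
    fderiv ℝ (fun q : V3 × V3 => (1 / 2) * dot3 q.2 (dvec a q.2) + V q.1) p v =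
      dot3 (dvec a p.2) v.2 + fderiv ℝ V p.1 v.1 := by
  have hco : ∀ i : Fin 3, HasFDerivAt (fun q : V3 × V3 => q.2 i)
      ((ContinuousLinearMap.proj i).comp (ContinuousLinearMap.snd ℝ V3 V3)) p :=
    fun i => ((ContinuousLinearMap.proj i).comp (ContinuousLinearMap.snd ℝ V3 V3)).hasFDerivAt
  have hterm : ∀ i : Fin 3, HasFDerivAt (fun q : V3 × V3 => q.2 i * (a i * q.2 i))
      (p.2 i • ((a i) • ((ContinuousLinearMap.proj i).comp (ContinuousLinearMap.snd ℝ V3 V3)))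
        + (a i * p.2 i) • ((ContinuousLinearMap.proj i).comp (ContinuousLinearMap.snd ℝ V3 V3))) p :=
    fun i => (hco i).mul ((hco i).const_mul (a i))
  have hVf : HasFDerivAt (fun q : V3 × V3 => V q.1)
      ((fderiv ℝ V p.1).comp (ContinuousLinearMap.fst ℝ V3 V3)) p :=
    ((hV.differentiable (by simp)).differentiableAt.hasFDerivAt).comp p hasFDerivAt_fst
  have htot := ((((hterm 0).add (hterm 1)).add (hterm 2)).const_mul ((1:ℝ)/2)).add hVf
  have heq : (fun q : V3 × V3 => (1 / 2) * dot3 q.2 (dvec a q.2) + V q.1) =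
      (fun q : V3 × V3 => (1/2 : ℝ) * ((q.2 0 * (a 0 * q.2 0) + q.2 1 * (a 1 * q.2 1)) + q.2 2 * (a 2 * q.2 2)) + V q.1) := rfl
  rw [heq, HasFDerivAt.fderiv (f := fun q : V3 × V3 => (1/2 : ℝ) * ((q.2 0 * (a 0 * q.2 0) + q.2 1 * (a 1 * q.2 1)) + q.2 2 * (a 2 * q.2 2)) + V q.1) htot]
  simp [dot3, dvec, ContinuousLinearMap.comp_apply, smul_eq_mul]
  ring

lemma keyval (a : V3) (B C : Matrix (Fin 3) (Fin 3) ℝ) (α : V3) (V : V3 → ℝ)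
    (hV : ContDiff ℝ (⊤ : ℕ∞) V) (p : V3 × V3) :
    fderiv ℝ (fun q : V3 × V3 => (1 / 2) * dot3 q.2 (dvec a q.2) + V q.1) p
        (Xeqg B C α V (fun q => dvec a q.2) p) =
      dot3 (dvec a p.2) (cross3 (C.mulVec (dvec a p.2)) p.1) := by
  rw [energy_fderiv a V hV, lin3 (fderiv ℝ V p.1)]
  simp only [Xeqg, cross3, dot3, dvec, grad3, pd3, Matrix.mulVec, dotProduct,
    Fin.sum_univ_three, Pi.add_apply, Pi.sub_apply, Matrix.cons_val_zero, Matrix.cons_val_one,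
    Matrix.head_cons, Matrix.cons_val_two, Matrix.tail_cons]
  ring

/-- For (eq-g) with `ω = AM`, `A = diag(a1,a2,a3)` invertible, `B` symmetric,
`α` and smooth `V` arbitrary: the total mechanical energy `H = ½(M, AM) + V(γ)` is a
first integral (`X(H) = 0` identically) iff `C = λE` for some `λ ∈ ℝ`. -/
theorem eqg_energy_first_integral_iff_C_scalar
    (a : V3) (ha : ∀ i, a i ≠ 0)
    (B C : Matrix (Fin 3) (Fin 3) ℝ) (hB : B.IsSymm) (hC : C.IsSymm)
    (α : V3) (V : V3 → ℝ) (hV : ContDiff ℝ (⊤ : ℕ∞) V) :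
    (∀ p : V3 × V3,
        fderiv ℝ (fun q => (1 / 2) * dot3 q.2 (dvec a q.2) + V q.1) p
          (Xeqg B C α V (fun q => dvec a q.2) p) = 0) ↔
      (∃ l : ℝ, C = l • (1 : Matrix (Fin 3) (Fin 3) ℝ)) := by
  have hred : ∀ p : V3 × V3,
      fderiv ℝ (fun q => (1 / 2) * dot3 q.2 (dvec a q.2) + V q.1) p
          (Xeqg B C α V (fun q => dvec a q.2) p) =
        dot3 (dvec a p.2) (cross3 (C.mulVec (dvec a p.2)) p.1) :=
    fun p => keyval a B C α V hV p
  simp only [hred]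
  constructor
  · intro h
    have h2 : ∀ w γ : V3, dot3 w (cross3 (C.mulVec w) γ) = 0 := by
      intro w γ
      have hw : dvec a (fun i => w i / a i) = w := by
        funext i; simp [dvec]; rw [mul_comm, div_mul_cancel₀ _ (ha i)]
      have := h (γ, fun i => w i / a i)
      simpa [hw] using this
    have e20 := h2 ![1,0,0] ![0,1,0]
    have e10 := h2 ![1,0,0] ![0,0,1]
    have e21 := h2 ![0,1,0] ![1,0,0]
    have e01 := h2 ![0,1,0] ![0,0,1]
    have e12 := h2 ![0,0,1] ![1,0,0]
    have e02 := h2 ![0,0,1] ![0,1,0]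
    have d01 := h2 ![1,1,0] ![0,0,1]
    have d02 := h2 ![1,0,1] ![0,1,0]
    simp [dot3, cross3, Matrix.mulVec, dotProduct, Fin.sum_univ_three] at e20 e10 e21 e01 e12 e02 d01 d02
    refine ⟨C 0 0, ?_⟩
    ext i j
    fin_cases i <;> fin_cases j <;>
      simp [Matrix.one_apply, Matrix.smul_apply] <;> linarith
  · rintro ⟨l, rfl⟩ p
    simp [dot3, cross3, dvec, Matrix.mulVec, dotProduct, Fin.sum_univ_three,
      Matrix.smul_apply, Matrix.one_apply]
    ring
end
end

section
/- Let X be the vector field of the equations (eq-g) with the nonholonomic angular velocity ω = A_γM, where A = diag(a1,a2,a3) has positive entries, d > 0, and B symmetric, α ∈ ℝ³, smooth V arbitrary. Then the total mechanical energy H(γ,M) = ½(M, A_γM) + V(γ) is a first integral of (eq-g) on the domain g > 0 if and only if the symmetric matrix C is a scalar multiple of the identity, C = λE for some λ ∈ ℝ. -/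
noncomputable section

def c1V (i : Fin 3) : (V3 × V3) →L[ℝ] ℝ :=
  (ContinuousLinearMap.proj i).comp (ContinuousLinearMap.fst ℝ V3 V3)
def c2V (i : Fin 3) : (V3 × V3) →L[ℝ] ℝ :=
  (ContinuousLinearMap.proj i).comp (ContinuousLinearMap.snd ℝ V3 V3)
@[simp] lemma c1V_apply (i : Fin 3) (w : V3 × V3) : c1V i w = w.1 i := rfl
@[simp] lemma c2V_apply (i : Fin 3) (w : V3 × V3) : c2V i w = w.2 i := rfl

set_option maxHeartbeats 2000000 in
lemma fderiv_Hch_apply (a : V3) (d : ℝ) (V : V3 → ℝ) (hV : ContDiff ℝ (⊤ : ℕ∞) V)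
    (p : V3 × V3) (h : 0 < 1 - d * dot3 p.1 (dvec a p.1)) (w : V3 × V3) :
    fderiv ℝ (Hch a d V) p w =
      d * dot3 p.1 (dvec a p.2) * (1 - d * dot3 p.1 (dvec a p.1))⁻¹ *
          dot3 (omegaCh a d p.1 p.2) w.1
        + fderiv ℝ V p.1 w.1 + dot3 (omegaCh a d p.1 p.2) w.2 := by
  have hne : (1 - d * dot3 p.1 (dvec a p.1)) ≠ 0 := ne_of_gt h
  have h0 : ∀ i, HasFDerivAt (fun p : V3 × V3 => p.1 i) (c1V i) p := fun i => (c1V i).hasFDerivAt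
  have h1 : ∀ i, HasFDerivAt (fun p : V3 × V3 => p.2 i) (c2V i) p := fun i => (c2V i).hasFDerivAt
  have hS := (((h0 0).mul ((h1 0).const_mul (a 0))).add
      ((h0 1).mul ((h1 1).const_mul (a 1)))).add ((h0 2).mul ((h1 2).const_mul (a 2)))
  have hQ := (((h0 0).mul ((h0 0).const_mul (a 0))).add
      ((h0 1).mul ((h0 1).const_mul (a 1)))).add ((h0 2).mul ((h0 2).const_mul (a 2)))
  have hne' : (1 : ℝ) - d * (p.1 0 * (a 0 * p.1 0) + p.1 1 * (a 1 * p.1 1)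
      + p.1 2 * (a 2 * p.1 2)) ≠ 0 := hne
  have hr := (hasFDerivAt_inv' hne').comp p ((hQ.const_mul d).const_sub 1)
  have hsr := (hS.const_mul d).mul hr
  have hω : ∀ i, HasFDerivAt (fun p : V3 × V3 => omegaCh a d p.1 p.2 i) _ p := fun i =>
    ((h1 i).const_mul (a i)).add (hsr.mul ((h0 i).const_mul (a i)))
  have hterm := fun i => (h1 i).mul (hω i)
  have hVc := (hV.differentiable (by simp) p.1).hasFDerivAt.comp p (hasFDerivAt_fst (p := p))
  have hH : HasFDerivAt (Hch a d V) _ p :=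
    ((((hterm 0).add (hterm 1)).add (hterm 2)).const_mul (1/2 : ℝ)).add hVc
  rw [hH.fderiv]
  simp only [ContinuousLinearMap.add_apply, ContinuousLinearMap.smul_apply,
    ContinuousLinearMap.comp_apply, ContinuousLinearMap.coe_fst', c1V_apply, c2V_apply,
    ContinuousLinearMap.neg_apply, smul_eq_mul, Function.comp_apply,
    ContinuousLinearMap.mulLeftRight_apply, ContinuousLinearMap.coe_comp']
  simp only [omegaCh, dot3, dvec, Pi.mul_apply, Pi.add_apply, Function.comp_apply]
  ring

lemma fderiv_eq_dot3 (f : V3 → ℝ) (x u : V3) :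
    fderiv ℝ f x u = dot3 (grad3 f x) u := by
  have hu : u = u 0 • (Pi.single 0 1 : V3) + u 1 • (Pi.single 1 1 : V3)
      + u 2 • (Pi.single 2 1 : V3) := by
    funext i; fin_cases i <;> simp
  conv_lhs => rw [hu]
  simp only [map_add, map_smul, smul_eq_mul, grad3, pd3, dot3]
  ring


/-- For (eq-g) with the nonholonomic angular velocity `ω = A_γM`
(`A` with positive entries, `d > 0`), `B` symmetric, `α` and smooth `V` arbitrary:
the total mechanical energy `H = ½(M, A_γM) + V(γ)` is a first integral on the domain
`g > 0` iff `C = λE` for some `λ ∈ ℝ`. -/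
theorem eqg_nonholonomic_energy_first_integral_iff_C_scalar
    (a : V3) (ha : ∀ i, 0 < a i) (d : ℝ) (hd : 0 < d)
    (B C : Matrix (Fin 3) (Fin 3) ℝ) (hB : B.IsSymm) (hC : C.IsSymm)
    (α : V3) (V : V3 → ℝ) (hV : ContDiff ℝ (⊤ : ℕ∞) V) :
    (∀ p : V3 × V3, 0 < 1 - d * dot3 p.1 (dvec a p.1) →
        fderiv ℝ (Hch a d V) p
          (Xeqg B C α V (fun q => omegaCh a d q.1 q.2) p) = 0) ↔
      (∃ l : ℝ, C = l • (1 : Matrix (Fin 3) (Fin 3) ℝ)) := by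
  have key : ∀ p : V3 × V3, 0 < 1 - d * dot3 p.1 (dvec a p.1) →
      fderiv ℝ (Hch a d V) p (Xeqg B C α V (fun q => omegaCh a d q.1 q.2) p)
        = dot3 (omegaCh a d p.1 p.2) (cross3 (C.mulVec (omegaCh a d p.1 p.2)) p.1) := by
    intro p hp
    rw [fderiv_Hch_apply a d V hV p hp, fderiv_eq_dot3]
    simp only [Xeqg]
    set ω := omegaCh a d p.1 p.2 with hω
    simp only [dot3, cross3, dvec, Pi.add_apply, Pi.sub_apply,
      Matrix.cons_val_zero, Matrix.cons_val_one, Matrix.head_cons, Matrix.cons_val_two,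
      Matrix.tail_cons]
    ring
  constructor
  · intro hfi
    have step : ∀ γ v : V3, 0 < 1 - d * dot3 γ (dvec a γ) →
        dot3 v (cross3 (C.mulVec v) γ) = 0 := by
      intro γ v hγ
      set M : V3 := fun i => (a i)⁻¹ * v i - (d * dot3 γ v) * γ i with hM
      have hωv : omegaCh a d γ M = v := by
        have ht := ne_of_gt hγ
        have hSv : dot3 γ (dvec a M) = dot3 γ v * (1 - d * dot3 γ (dvec a γ)) := by
          simp only [dot3, dvec, hM]
          field_simp [(ha 0).ne', (ha 1).ne', (ha 2).ne']
          ring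
        funext i
        have hai := (ha i).ne'
        simp only [omegaCh, hSv]
        simp only [hM]
        field_simp [hai]
        ring
      have h2 := key (γ, M) (by simpa using hγ)
      have h3 := hfi (γ, M) (by simpa using hγ)
      have h4 := h2.symm.trans h3
      simpa [hωv] using h4
    have hvg : ∀ v g : V3, dot3 v (cross3 (C.mulVec v) g) = 0 := by
      intro v g
      set c := dot3 g (dvec a g) with hcdef
      have hc : 0 ≤ c := by
        have h0 := mul_nonneg (ha 0).le (mul_self_nonneg (g 0))
        have h1 := mul_nonneg (ha 1).le (mul_self_nonneg (g 1))
        have h2 := mul_nonneg (ha 2).le (mul_self_nonneg (g 2))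
        simp only [hcdef, dot3, dvec]
        nlinarith
      have h1p : (0:ℝ) < 1 + d * c := by nlinarith
      set t := (1 + d * c)⁻¹ with htdef
      have ht0 : 0 < t := inv_pos.mpr h1p
      have htmul : t * (1 + d * c) = 1 := inv_mul_cancel₀ (ne_of_gt h1p)
      have hdc : dot3 (t • g) (dvec a (t • g)) = t ^ 2 * c := by
        simp only [dot3, dvec, Pi.smul_apply, smul_eq_mul, hcdef]
        ring
      have hdom : 0 < 1 - d * dot3 (t • g) (dvec a (t • g)) := by
        rw [hdc]
        have h3 : d * (t ^ 2 * c) = t - t ^ 2 := by linear_combination t * htmul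
        rw [h3]
        nlinarith [sq_nonneg (2 * t - 1)]
      have h4 := step (t • g) v hdom
      have h5 : dot3 v (cross3 (C.mulVec v) (t • g)) = t * dot3 v (cross3 (C.mulVec v) g) := by
        simp only [dot3, cross3, Pi.smul_apply, smul_eq_mul,
          Matrix.cons_val_zero, Matrix.cons_val_one, Matrix.head_cons, Matrix.cons_val_two,
          Matrix.tail_cons]
        ring
      rw [h5] at h4
      exact (mul_eq_zero.mp h4).resolve_left (ne_of_gt ht0)
    have q1 := hvg ![1,0,0] ![0,1,0]
    have q2 := hvg ![1,0,0] ![0,0,1]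
    have q3 := hvg ![0,1,0] ![1,0,0]
    have q4 := hvg ![0,1,0] ![0,0,1]
    have q5 := hvg ![0,0,1] ![1,0,0]
    have q6 := hvg ![0,0,1] ![0,1,0]
    have q7 := hvg ![1,1,0] ![0,0,1]
    have q8 := hvg ![1,0,1] ![0,1,0]
    simp only [dot3, cross3, Matrix.mulVec, dotProduct, Fin.sum_univ_three,
      Matrix.cons_val_zero, Matrix.cons_val_one, Matrix.head_cons, Matrix.cons_val_two,
      Matrix.tail_cons, mul_one, mul_zero, zero_mul, one_mul, add_zero, zero_add,
      zero_sub, sub_zero] at q1 q2 q3 q4 q5 q6 q7 q8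
    refine ⟨C 0 0, ?_⟩
    ext i j
    fin_cases i <;> fin_cases j <;>
      simp [Matrix.one_apply, Fin.ext_iff] <;> linarith
  · rintro ⟨l, rfl⟩
    intro p hp
    rw [key p hp]
    rw [Matrix.smul_mulVec, Matrix.one_mulVec]
    simp only [dot3, cross3, Pi.smul_apply, smul_eq_mul,
      Matrix.cons_val_zero, Matrix.cons_val_one, Matrix.head_cons, Matrix.cons_val_two,
      Matrix.tail_cons]
    ring
end
end

section
/- Consider the equations (eq-g) with ω = AM, A = diag(a1,a2,a3) with pairwise distinct entries, α = 0, V = 0, C = diag(c1,c2,c3) diagonal, and B = diag((a2c2 − a3c3)/(a2 − a3), (a3c3 − a1c1)/(a3 − a1), (a1c1 − a2c2)/(a1 − a2)). Then the square of the angular momentum M² = (M,M) = M1² + M2² + M3² is a first integral of (eq-g). -/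
noncomputable section

/-! Along (eq-g) one has `d/dt (M,M) = 2 (M, Ṁ)`. The term `(M × AM, M)` vanishes, and for
diagonal `A`, `B`, `C` the remaining triple products `(M, Bγ × AM) + (M, CAM × γ)` collect into
`Σ_cyclic ε_{ijk} M_i M_k γ_j (b_j (a_k − a_i) − a_k c_k + a_i c_i)`, and the entries of `B` are
chosen so that every bracket vanishes. -/

theorem dot3_add_right (x y z : V3) : dot3 x (y + z) = dot3 x y + dot3 x z := by
  simp only [dot3, Pi.add_apply]; ring

theorem cross3_add_left (x y z : V3) : cross3 (x + y) z = cross3 x z + cross3 y z := by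
  ext i; fin_cases i <;> simp [cross3] <;> ring

theorem dot3_cross3_self_left (x y : V3) : dot3 x (cross3 x y) = 0 := by
  simp only [dot3, cross3, Matrix.cons_val_zero, Matrix.cons_val_one, Matrix.cons_val_two,
    Matrix.head_cons, Matrix.tail_cons]
  ring

theorem grad3_const (r : ℝ) (γ : V3) : grad3 (fun _ => r) γ = 0 := by
  ext i; simp [grad3, pd3]

theorem diagonal_mulVec_eq_dvec (b x : V3) : (Matrix.diagonal b).mulVec x = dvec b x := by
  ext i; simp [dvec, Matrix.mulVec_diagonal]

theorem HasDerivAt.dot3_self {x : ℝ → V3} {x' : V3} {t : ℝ} (hx : HasDerivAt x x' t) :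
    HasDerivAt (fun s => dot3 (x s) (x s)) (2 * dot3 (x t) x') t := by
  have hxi := hasDerivAt_pi.mp hx
  unfold dot3
  exact ((((hxi 0).fun_mul (hxi 0)).fun_add ((hxi 1).fun_mul (hxi 1))).fun_add
    ((hxi 2).fun_mul (hxi 2))).congr_deriv (by ring)

theorem Xeqg_snd_diagonal (a b c : V3) (p : V3 × V3) :
    (Xeqg (Matrix.diagonal b) (Matrix.diagonal c) 0 (fun _ => 0) (fun q => dvec a q.2) p).2 =
      cross3 p.2 (dvec a p.2) +
        (cross3 (dvec b p.1) (dvec a p.2) + cross3 (dvec c (dvec a p.2)) p.1) := by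
  simp only [Xeqg, diagonal_mulVec_eq_dvec, grad3_const, add_zero, sub_zero,
    cross3_add_left, add_assoc]

theorem dot3_cross3_dvec_eq_zero (a b c x y : V3)
    (h0 : b 0 * (a 1 - a 2) = a 1 * c 1 - a 2 * c 2)
    (h1 : b 1 * (a 2 - a 0) = a 2 * c 2 - a 0 * c 0)
    (h2 : b 2 * (a 0 - a 1) = a 0 * c 0 - a 1 * c 1) :
    dot3 x (cross3 (dvec b y) (dvec a x) + cross3 (dvec c (dvec a x)) y) = 0 := by
  simp only [dot3, cross3, dvec, Pi.add_apply, Matrix.cons_val_zero, Matrix.cons_val_one,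
    Matrix.cons_val_two, Matrix.head_cons, Matrix.tail_cons]
  linear_combination (x 1 * x 2 * y 0) * h0 + (x 2 * x 0 * y 1) * h1 + (x 0 * x 1 * y 2) * h2

theorem eqg_momentum_square_first_integral_general
    (a c : V3) (h01 : a 0 ≠ a 1) (h02 : a 0 ≠ a 2) (h12 : a 1 ≠ a 2)
    (B C : Matrix (Fin 3) (Fin 3) ℝ)
    (hC : C = Matrix.diagonal c)
    (hB : B = Matrix.diagonal
      ![(a 1 * c 1 - a 2 * c 2) / (a 1 - a 2),
        (a 2 * c 2 - a 0 * c 0) / (a 2 - a 0),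
        (a 0 * c 0 - a 1 * c 1) / (a 0 - a 1)])
    (γ M : ℝ → V3)
    (hM : ∀ t : ℝ, HasDerivAt M
      ((Xeqg B C 0 (fun _ => 0) (fun q => dvec a q.2) (γ t, M t)).2) t)
    (t : ℝ) :
    HasDerivAt (fun s => dot3 (M s) (M s)) 0 t := by
  set b : V3 := ![(a 1 * c 1 - a 2 * c 2) / (a 1 - a 2),
    (a 2 * c 2 - a 0 * c 0) / (a 2 - a 0), (a 0 * c 0 - a 1 * c 1) / (a 0 - a 1)]
  have hb0 : b 0 * (a 1 - a 2) = a 1 * c 1 - a 2 * c 2 :=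
    div_mul_cancel₀ _ (sub_ne_zero.mpr h12)
  have hb1 : b 1 * (a 2 - a 0) = a 2 * c 2 - a 0 * c 0 :=
    div_mul_cancel₀ _ (sub_ne_zero.mpr h02.symm)
  have hb2 : b 2 * (a 0 - a 1) = a 0 * c 0 - a 1 * c 1 :=
    div_mul_cancel₀ _ (sub_ne_zero.mpr h01)
  have hdot : dot3 (M t) ((Xeqg B C 0 (fun _ => 0) (fun q => dvec a q.2) (γ t, M t)).2) = 0 := by
    rw [hB, hC, Xeqg_snd_diagonal, dot3_add_right, dot3_cross3_self_left,
      dot3_cross3_dvec_eq_zero a b c _ _ hb0 hb1 hb2, add_zero]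
  simpa only [hdot, mul_zero] using (hM t).dot3_self

/-- For (eq-g) with `ω = AM` (pairwise distinct `a_i`), `α = 0`, `V = 0`,
`C = diag(c1,c2,c3)` and
`B = diag((a2c2 − a3c3)/(a2 − a3), (a3c3 − a1c1)/(a3 − a1), (a1c1 − a2c2)/(a1 − a2))`,
the square of the angular momentum `M² = (M,M)` is a first integral. -/
theorem eqg_momentum_square_first_integral
    (a c : V3) (h01 : a 0 ≠ a 1) (h02 : a 0 ≠ a 2) (h12 : a 1 ≠ a 2)
    (B C : Matrix (Fin 3) (Fin 3) ℝ)
    (hC : C = Matrix.diagonal c)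
    (hB : B = Matrix.diagonal
      ![(a 1 * c 1 - a 2 * c 2) / (a 1 - a 2),
        (a 2 * c 2 - a 0 * c 0) / (a 2 - a 0),
        (a 0 * c 0 - a 1 * c 1) / (a 0 - a 1)])
    (γ M : ℝ → V3)
    (hγ : ∀ t : ℝ, HasDerivAt γ
      ((Xeqg B C 0 (fun _ => 0) (fun q => dvec a q.2) (γ t, M t)).1) t)
    (hM : ∀ t : ℝ, HasDerivAt M
      ((Xeqg B C 0 (fun _ => 0) (fun q => dvec a q.2) (γ t, M t)).2) t)
    (t : ℝ) :
    HasDerivAt (fun s => dot3 (M s) (M s)) 0 t :=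
  eqg_momentum_square_first_integral_general a c h01 h02 h12 B C hC hB γ M hM t
end
end

section
/- Let b = (b1,b2,b3): ℝ³→ℝ³ be a smooth field and let P_φ be the bivector on ℝ⁶ = {(γ,M)} with brackets {γ_i,γ_j} = 0, {M_i,γ_j} = ε_{ijk}γ_k, {M_i,M_j} = ε_{ijk}(M_k + b_k(γ)). Then P_φ satisfies the Jacobi identity (is a Poisson bivector) if and only if (γ, curl b(γ)) = 0 for all γ, where curl b = ∇×b. -/
noncomputable section
set_option maxHeartbeats 1000000

section AuxPphi
variable (b : V3 → V3)

lemma diffb (hb : ContDiff ℝ (⊤ : ℕ∞) b) (k : Fin 3) : Differentiable ℝ (fun x => b x k) :=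
  differentiable_pi.mp (hb.differentiable (by simp)) k

lemma hasFD1 (c : Fin 3 → ℝ) (p : V3 × V3) :
    HasFDerivAt (fun q : V3 × V3 => ∑ k, c k * q.1 k)
      (∑ k, c k • ((ContinuousLinearMap.proj k).comp (ContinuousLinearMap.fst ℝ V3 V3))) p := by
  apply HasFDerivAt.fun_sum
  intro k _
  exact (((ContinuousLinearMap.proj k).comp
    (ContinuousLinearMap.fst ℝ V3 V3)).hasFDerivAt).const_mul (c k)

lemma fd1 (c : Fin 3 → ℝ) (p v : V3 × V3) :
    fderiv ℝ (fun q : V3 × V3 => ∑ k, c k * q.1 k) p v = ∑ k, c k * v.1 k := by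
  rw [(hasFD1 c p).fderiv]; simp

lemma hasFD2 (hb : ContDiff ℝ (⊤ : ℕ∞) b) (c : Fin 3 → ℝ) (p : V3 × V3) :
    HasFDerivAt (fun q : V3 × V3 => ∑ k, c k * (q.2 k + b q.1 k))
      (∑ k, c k • (((ContinuousLinearMap.proj k).comp (ContinuousLinearMap.snd ℝ V3 V3)) +
        (fderiv ℝ (fun x => b x k) p.1).comp (ContinuousLinearMap.fst ℝ V3 V3))) p := by
  apply HasFDerivAt.fun_sum
  intro k _
  apply HasFDerivAt.const_mul
  apply HasFDerivAt.add
  · exact ((ContinuousLinearMap.proj k).comp (ContinuousLinearMap.snd ℝ V3 V3)).hasFDerivAt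
  · exact HasFDerivAt.comp p (diffb b hb k p.1).hasFDerivAt (hasFDerivAt_fst)

lemma fd2 (hb : ContDiff ℝ (⊤ : ℕ∞) b) (c : Fin 3 → ℝ) (p v : V3 × V3) :
    fderiv ℝ (fun q : V3 × V3 => ∑ k, c k * (q.2 k + b q.1 k)) p v =
      ∑ k, c k * (v.2 k + fderiv ℝ (fun x => b x k) p.1 v.1) := by
  rw [(hasFD2 b hb c p).fderiv]; simp [mul_add]

lemma fdP_LL (i j : Fin 3) (p : V3 × V3) (w : V3 × V3) :
    fderiv ℝ (fun q => Pphi b q (Sum.inl i) (Sum.inl j)) p w = 0 := by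
  simp only [Pphi]; simp

lemma fdP_RL (i j : Fin 3) (p : V3 × V3) (l : Fin 3 ⊕ Fin 3) :
    fderiv ℝ (fun q => Pphi b q (Sum.inr i) (Sum.inl j)) p (bvec l) =
      Sum.elim (fun m => eps i j m) (fun _ => (0:ℝ)) l := by
  simp only [Pphi]
  rw [fd1]
  rcases l with m | m <;> simp [bvec, Pi.single_apply, mul_ite, Finset.sum_ite_eq']

lemma fdP_LR (i j : Fin 3) (p : V3 × V3) (l : Fin 3 ⊕ Fin 3) :
    fderiv ℝ (fun q => Pphi b q (Sum.inl i) (Sum.inr j)) p (bvec l) =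
      Sum.elim (fun m => -eps j i m) (fun _ => (0:ℝ)) l := by
  simp only [Pphi]
  have : ∀ q : V3 × V3, -(∑ k, eps j i k * q.1 k) = ∑ k, (-eps j i k) * q.1 k := by
    intro q; rw [← Finset.sum_neg_distrib]; simp [neg_mul]
  simp only [this]
  rw [fd1]
  rcases l with m | m <;> simp [bvec, Pi.single_apply, mul_ite, Finset.sum_ite_eq']

lemma fdP_RR (hb : ContDiff ℝ (⊤ : ℕ∞) b) (i j : Fin 3) (p : V3 × V3) (l : Fin 3 ⊕ Fin 3) :
    fderiv ℝ (fun q => Pphi b q (Sum.inr i) (Sum.inr j)) p (bvec l) =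
      Sum.elim (fun m => ∑ k, eps i j k * pd3 (fun x => b x k) p.1 m)
        (fun m => eps i j m) l := by
  simp only [Pphi]
  rw [fd2 b hb]
  rcases l with m | m <;>
    simp [bvec, pd3, Pi.single_apply, mul_ite, Finset.sum_ite_eq']

end AuxPphi

lemma eps_000 : eps 0 0 0 = 0 := by norm_num [eps]
lemma eps_001 : eps 0 0 1 = 0 := by norm_num [eps]
lemma eps_002 : eps 0 0 2 = 0 := by norm_num [eps]
lemma eps_010 : eps 0 1 0 = 0 := by norm_num [eps]
lemma eps_011 : eps 0 1 1 = 0 := by norm_num [eps]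
lemma eps_012 : eps 0 1 2 = 1 := by norm_num [eps]
lemma eps_020 : eps 0 2 0 = 0 := by norm_num [eps]
lemma eps_021 : eps 0 2 1 = -1 := by norm_num [eps]
lemma eps_022 : eps 0 2 2 = 0 := by norm_num [eps]
lemma eps_100 : eps 1 0 0 = 0 := by norm_num [eps]
lemma eps_101 : eps 1 0 1 = 0 := by norm_num [eps]
lemma eps_102 : eps 1 0 2 = -1 := by norm_num [eps]
lemma eps_110 : eps 1 1 0 = 0 := by norm_num [eps]
lemma eps_111 : eps 1 1 1 = 0 := by norm_num [eps]
lemma eps_112 : eps 1 1 2 = 0 := by norm_num [eps]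
lemma eps_120 : eps 1 2 0 = 1 := by norm_num [eps]
lemma eps_121 : eps 1 2 1 = 0 := by norm_num [eps]
lemma eps_122 : eps 1 2 2 = 0 := by norm_num [eps]
lemma eps_200 : eps 2 0 0 = 0 := by norm_num [eps]
lemma eps_201 : eps 2 0 1 = 1 := by norm_num [eps]
lemma eps_202 : eps 2 0 2 = 0 := by norm_num [eps]
lemma eps_210 : eps 2 1 0 = -1 := by norm_num [eps]
lemma eps_211 : eps 2 1 1 = 0 := by norm_num [eps]
lemma eps_212 : eps 2 1 2 = 0 := by norm_num [eps]
lemma eps_220 : eps 2 2 0 = 0 := by norm_num [eps]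
lemma eps_221 : eps 2 2 1 = 0 := by norm_num [eps]
lemma eps_222 : eps 2 2 2 = 0 := by norm_num [eps]

lemma finmk0 (h : 0 < 3) : (⟨0, h⟩ : Fin 3) = (0 : Fin 3) := rfl
lemma finmk1 (h : 1 < 3) : (⟨1, h⟩ : Fin 3) = (1 : Fin 3) := rfl
lemma finmk2 (h : 2 < 3) : (⟨2, h⟩ : Fin 3) = (2 : Fin 3) := rfl

/-- For a smooth field `b : ℝ³ → ℝ³`, the bivector `P_φ` satisfies the
Jacobi identity (is a Poisson bivector) iff `(γ, curl b(γ)) = 0` for all `γ`. -/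
theorem Pphi_jacobi_iff_solenoidal
    (b : V3 → V3) (hb : ContDiff ℝ (⊤ : ℕ∞) b) :
    (∀ p : V3 × V3, ∀ i j k : Fin 3 ⊕ Fin 3, jacobiAt (Pphi b) p i j k = 0) ↔
      (∀ γ : V3, dot3 γ (curl3 b γ) = 0) := by
  constructor
  · intro h γ
    have H := h (γ, 0) (Sum.inr 0) (Sum.inr 1) (Sum.inr 2)
    simp only [jacobiAt, Fintype.sum_sum_type, Fin.sum_univ_three] at H
    simp only [fdP_LL b, fdP_RL b, fdP_LR b, fdP_RR b hb, Sum.elim_inl, Sum.elim_inr] at H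
    simp only [Pphi, finmk0, finmk1, finmk2, Fin.sum_univ_three, eps_000, eps_001, eps_002, eps_010, eps_011, eps_012, eps_020, eps_021, eps_022, eps_100, eps_101, eps_102, eps_110, eps_111, eps_112, eps_120, eps_121, eps_122, eps_200, eps_201, eps_202, eps_210, eps_211, eps_212, eps_220, eps_221, eps_222, mul_zero, zero_mul, mul_one, one_mul, neg_zero, add_zero, zero_add, neg_mul, mul_neg, neg_neg] at H
    simp only [dot3, curl3, Matrix.cons_val_zero, Matrix.cons_val_one, Matrix.head_cons,
      Matrix.cons_val_two, Matrix.tail_cons]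
    ring_nf at H ⊢
    linarith [H]
  · intro h p i j k
    have hγ := h p.1
    simp only [dot3, curl3, Matrix.cons_val_zero, Matrix.cons_val_one, Matrix.head_cons,
      Matrix.cons_val_two, Matrix.tail_cons] at hγ
    ring_nf at hγ
    rcases i with i | i <;> rcases j with j | j <;> rcases k with k | k <;>
      fin_cases i <;> fin_cases j <;> fin_cases k <;>
      (simp only [jacobiAt, Fintype.sum_sum_type, Fin.sum_univ_three];
       simp only [fdP_LL b, fdP_RL b, fdP_LR b, fdP_RR b hb, Sum.elim_inl, Sum.elim_inr];
       simp only [Pphi, finmk0, finmk1, finmk2, Fin.sum_univ_three, eps_000, eps_001, eps_002, eps_010, eps_011, eps_012, eps_020, eps_021, eps_022, eps_100, eps_101, eps_102, eps_110, eps_111, eps_112, eps_120, eps_121, eps_122, eps_200, eps_201, eps_202, eps_210, eps_211, eps_212, eps_220, eps_221, eps_222, mul_zero, zero_mul, mul_one, one_mul, neg_zero, add_zero, zero_add, neg_mul, mul_neg, neg_neg]) <;>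
      ring_nf <;> linarith [hγ]
end
end

section
/- Let c = (c1,c2,c3): ℝ³→ℝ³ be an arbitrary smooth field and define b = (b1,b2,b3) by b1 = (∂c2/∂γ2 + ∂c3/∂γ3)γ1 − ∂(γ2c2 + γ3c3)/∂γ1 − c1, b2 = (∂c1/∂γ1 + ∂c3/∂γ3)γ2 − ∂(γ1c1 + γ3c3)/∂γ2 − c2, b3 = (∂c1/∂γ1 + ∂c2/∂γ2)γ3 − ∂(γ1c1 + γ2c2)/∂γ3 − c3. Then (γ, curl b(γ)) = 0 for all γ, and consequently the vector field γ ↦ γ×b(γ) on ℝ³ is solenoidal: div(γ×b) = 0 identically. -/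
noncomputable section

private lemma pd3_coord' (γ : V3) (i j : Fin 3) :
    pd3 (fun x : V3 => x j) γ i = if i = j then 1 else 0 := by
  have h : (fun x : V3 => x j) = (ContinuousLinearMap.proj j : V3 →L[ℝ] ℝ) := rfl
  rw [pd3, h, ContinuousLinearMap.fderiv]
  simp [Pi.single_apply, eq_comm]

private lemma diffAt_coord' (γ : V3) (j : Fin 3) :
    DifferentiableAt ℝ (fun x : V3 => x j) γ := by
  have h : (fun x : V3 => x j) = (ContinuousLinearMap.proj j : V3 →L[ℝ] ℝ) := rfl
  rw [h]; exact (ContinuousLinearMap.proj j : V3 →L[ℝ] ℝ).differentiableAt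

private lemma contDiff_coord' (j : Fin 3) : ContDiff ℝ (⊤ : ℕ∞) (fun x : V3 => x j) := by
  have h : (fun x : V3 => x j) = (ContinuousLinearMap.proj j : V3 →L[ℝ] ℝ) := rfl
  rw [h]; exact (ContinuousLinearMap.proj j : V3 →L[ℝ] ℝ).contDiff

private lemma pd3_add' (f g : V3 → ℝ) (γ : V3) (i : Fin 3)
    (hf : DifferentiableAt ℝ f γ) (hg : DifferentiableAt ℝ g γ) :
    pd3 (fun x => f x + g x) γ i = pd3 f γ i + pd3 g γ i := by
  simp [pd3, fderiv_fun_add hf hg]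

private lemma pd3_sub' (f g : V3 → ℝ) (γ : V3) (i : Fin 3)
    (hf : DifferentiableAt ℝ f γ) (hg : DifferentiableAt ℝ g γ) :
    pd3 (fun x => f x - g x) γ i = pd3 f γ i - pd3 g γ i := by
  simp [pd3, fderiv_fun_sub hf hg]

private lemma pd3_mul' (f g : V3 → ℝ) (γ : V3) (i : Fin 3)
    (hf : DifferentiableAt ℝ f γ) (hg : DifferentiableAt ℝ g γ) :
    pd3 (fun x => f x * g x) γ i = pd3 f γ i * g γ + f γ * pd3 g γ i := by
  simp [pd3, fderiv_fun_mul hf hg]; ring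

private lemma pd3_swap' (f : V3 → ℝ) (hf : ContDiff ℝ (⊤ : ℕ∞) f) (γ : V3) (i j : Fin 3) :
    pd3 (fun x => pd3 f x i) γ j = pd3 (fun x => pd3 f x j) γ i := by
  have hd : Differentiable ℝ f := hf.differentiable (by simp)
  have hd2 : DifferentiableAt ℝ (fderiv ℝ f) γ :=
    ((hf.fderiv_right (m := 1) (WithTop.coe_le_coe.mpr le_top)).differentiable (by simp)) γ
  have key : ∀ v w : V3,
      fderiv ℝ (fun x => fderiv ℝ f x v) γ w = fderiv ℝ (fderiv ℝ f) γ w v := by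
    intro v w
    rw [fderiv_clm_apply hd2 (differentiableAt_const v)]
    simp
  have hsym := second_derivative_symmetric (f := f) (fun y => (hd y).hasFDerivAt)
      hd2.hasFDerivAt (Pi.single i 1) (Pi.single j 1)
  simp only [pd3, key]
  exact hsym.symm

private lemma contDiff_pd3' (f : V3 → ℝ) (hf : ContDiff ℝ (⊤ : ℕ∞) f) (m : Fin 3) :
    ContDiff ℝ (⊤ : ℕ∞) (fun x => pd3 f x m) := by
  simp only [pd3]
  exact (hf.fderiv_right (by simp)).clm_apply contDiff_const

private lemma pd3_comb' (P Q R S T : V3 → ℝ) (γ : V3) (k j1 j2 i : Fin 3)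
    (hP : DifferentiableAt ℝ P γ) (hQ : DifferentiableAt ℝ Q γ)
    (hR : DifferentiableAt ℝ R γ) (hS : DifferentiableAt ℝ S γ)
    (hT : DifferentiableAt ℝ T γ) :
    pd3 (fun x => (P x + Q x) * x k - (x j1 * R x + x j2 * S x) - T x) γ i =
      (pd3 P γ i + pd3 Q γ i) * γ k + (P γ + Q γ) * (if i = k then 1 else 0) -
        ((if i = j1 then 1 else 0) * R γ + γ j1 * pd3 R γ i +
         ((if i = j2 then 1 else 0) * S γ + γ j2 * pd3 S γ i)) -
      pd3 T γ i := by
  have hPQ : DifferentiableAt ℝ (fun x => P x + Q x) γ := hP.add hQ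
  have h1 : DifferentiableAt ℝ (fun x : V3 => (P x + Q x) * x k) γ :=
    hPQ.mul (diffAt_coord' γ k)
  have h2 : DifferentiableAt ℝ (fun x : V3 => x j1 * R x) γ :=
    (diffAt_coord' γ j1).mul hR
  have h3 : DifferentiableAt ℝ (fun x : V3 => x j2 * S x) γ :=
    (diffAt_coord' γ j2).mul hS
  rw [pd3_sub' (fun x => (P x + Q x) * x k - (x j1 * R x + x j2 * S x)) T γ i ((h1.sub (h2.add h3))) hT,
      pd3_sub' (fun x => (P x + Q x) * x k) (fun x => x j1 * R x + x j2 * S x) γ i h1 (h2.add h3),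
      pd3_mul' _ _ γ i hPQ (diffAt_coord' γ k),
      pd3_add' _ _ γ i h2 h3,
      pd3_mul' _ _ γ i (diffAt_coord' γ j1) hR,
      pd3_mul' _ _ γ i (diffAt_coord' γ j2) hS,
      pd3_add' P Q γ i hP hQ, pd3_coord', pd3_coord', pd3_coord']

/-- For an arbitrary smooth field `c` and `b` defined by (eq-bc):
`b1 = (∂c2/∂γ2 + ∂c3/∂γ3)γ1 − (γ2 ∂c2/∂γ1 + γ3 ∂c3/∂γ1) − c1` (etc. cyclically-symmetrized),
one has `(γ, curl b(γ)) = 0` for all `γ`, and hence `γ ↦ γ×b(γ)` is solenoidal: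
`div(γ×b) = 0` identically. -/
theorem bfield_from_c_is_solenoidal
    (c : V3 → V3) (hc : ContDiff ℝ (⊤ : ℕ∞) c)
    (b : V3 → V3)
    (hb : ∀ γ : V3, b γ =
      ![(pd3 (fun x => c x 1) γ 1 + pd3 (fun x => c x 2) γ 2) * γ 0 -
          (γ 1 * pd3 (fun x => c x 1) γ 0 + γ 2 * pd3 (fun x => c x 2) γ 0) - c γ 0,
        (pd3 (fun x => c x 0) γ 0 + pd3 (fun x => c x 2) γ 2) * γ 1 -
          (γ 0 * pd3 (fun x => c x 0) γ 1 + γ 2 * pd3 (fun x => c x 2) γ 1) - c γ 1,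
        (pd3 (fun x => c x 0) γ 0 + pd3 (fun x => c x 1) γ 1) * γ 2 -
          (γ 0 * pd3 (fun x => c x 0) γ 2 + γ 1 * pd3 (fun x => c x 1) γ 2) - c γ 2]) :
    (∀ γ : V3, dot3 γ (curl3 b γ) = 0) ∧
    (∀ γ : V3, div3 (fun x => cross3 x (b x)) γ = 0) := by
  have hcc : ∀ a : Fin 3, ContDiff ℝ (⊤ : ℕ∞) (fun x => c x a) := fun a => contDiff_pi.mp hc a
  have hd1 : ∀ a m : Fin 3, ContDiff ℝ (⊤ : ℕ∞) (fun x => pd3 (fun y => c y a) x m) :=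
    fun a m => contDiff_pd3' _ (hcc a) m
  have hb0 : (fun x => b x 0) = fun x : V3 =>
      (pd3 (fun y => c y 1) x 1 + pd3 (fun y => c y 2) x 2) * x 0 -
        (x 1 * pd3 (fun y => c y 1) x 0 + x 2 * pd3 (fun y => c y 2) x 0) - c x 0 := by
    funext x; rw [hb x]
    simp only [Matrix.cons_val_zero]
  have hb1 : (fun x => b x 1) = fun x : V3 =>
      (pd3 (fun y => c y 0) x 0 + pd3 (fun y => c y 2) x 2) * x 1 -
        (x 0 * pd3 (fun y => c y 0) x 1 + x 2 * pd3 (fun y => c y 2) x 1) - c x 1 := by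
    funext x; rw [hb x]
    simp only [Matrix.cons_val_one, Matrix.head_cons, Matrix.cons_val_zero]
  have hb2 : (fun x => b x 2) = fun x : V3 =>
      (pd3 (fun y => c y 0) x 0 + pd3 (fun y => c y 1) x 1) * x 2 -
        (x 0 * pd3 (fun y => c y 0) x 2 + x 1 * pd3 (fun y => c y 1) x 2) - c x 2 := by
    funext x; rw [hb x]
    simp only [Matrix.cons_val_two, Matrix.tail_cons, Matrix.head_cons]
  have hcb0 : ContDiff ℝ (⊤ : ℕ∞) (fun x => b x 0) := by
    rw [hb0]
    exact ((((hd1 1 1).add (hd1 2 2)).mul (contDiff_coord' 0)).sub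
      (((contDiff_coord' 1).mul (hd1 1 0)).add ((contDiff_coord' 2).mul (hd1 2 0)))).sub (hcc 0)
  have hcb1 : ContDiff ℝ (⊤ : ℕ∞) (fun x => b x 1) := by
    rw [hb1]
    exact ((((hd1 0 0).add (hd1 2 2)).mul (contDiff_coord' 1)).sub
      (((contDiff_coord' 0).mul (hd1 0 1)).add ((contDiff_coord' 2).mul (hd1 2 1)))).sub (hcc 1)
  have hcb2 : ContDiff ℝ (⊤ : ℕ∞) (fun x => b x 2) := by
    rw [hb2]
    exact ((((hd1 0 0).add (hd1 1 1)).mul (contDiff_coord' 2)).sub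
      (((contDiff_coord' 0).mul (hd1 0 2)).add ((contDiff_coord' 1).mul (hd1 1 2)))).sub (hcc 2)
  have pdb0 : ∀ (γ : V3) (i : Fin 3), pd3 (fun x => b x 0) γ i =
      (pd3 (fun x => pd3 (fun y => c y 1) x 1) γ i +
        pd3 (fun x => pd3 (fun y => c y 2) x 2) γ i) * γ 0 +
      (pd3 (fun y => c y 1) γ 1 + pd3 (fun y => c y 2) γ 2) * (if i = 0 then 1 else 0) -
      ((if i = 1 then 1 else 0) * pd3 (fun y => c y 1) γ 0 +
        γ 1 * pd3 (fun x => pd3 (fun y => c y 1) x 0) γ i +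
       ((if i = 2 then 1 else 0) * pd3 (fun y => c y 2) γ 0 +
        γ 2 * pd3 (fun x => pd3 (fun y => c y 2) x 0) γ i)) -
      pd3 (fun y => c y 0) γ i := by
    intro γ i
    rw [hb0]
    exact pd3_comb' _ _ _ _ _ γ 0 1 2 i
      ((hd1 1 1).differentiable (by simp) γ) ((hd1 2 2).differentiable (by simp) γ)
      ((hd1 1 0).differentiable (by simp) γ) ((hd1 2 0).differentiable (by simp) γ)
      ((hcc 0).differentiable (by simp) γ)
  have pdb1 : ∀ (γ : V3) (i : Fin 3), pd3 (fun x => b x 1) γ i =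
      (pd3 (fun x => pd3 (fun y => c y 0) x 0) γ i +
        pd3 (fun x => pd3 (fun y => c y 2) x 2) γ i) * γ 1 +
      (pd3 (fun y => c y 0) γ 0 + pd3 (fun y => c y 2) γ 2) * (if i = 1 then 1 else 0) -
      ((if i = 0 then 1 else 0) * pd3 (fun y => c y 0) γ 1 +
        γ 0 * pd3 (fun x => pd3 (fun y => c y 0) x 1) γ i +
       ((if i = 2 then 1 else 0) * pd3 (fun y => c y 2) γ 1 +
        γ 2 * pd3 (fun x => pd3 (fun y => c y 2) x 1) γ i)) -
      pd3 (fun y => c y 1) γ i := by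
    intro γ i
    rw [hb1]
    exact pd3_comb' _ _ _ _ _ γ 1 0 2 i
      ((hd1 0 0).differentiable (by simp) γ) ((hd1 2 2).differentiable (by simp) γ)
      ((hd1 0 1).differentiable (by simp) γ) ((hd1 2 1).differentiable (by simp) γ)
      ((hcc 1).differentiable (by simp) γ)
  have pdb2 : ∀ (γ : V3) (i : Fin 3), pd3 (fun x => b x 2) γ i =
      (pd3 (fun x => pd3 (fun y => c y 0) x 0) γ i +
        pd3 (fun x => pd3 (fun y => c y 1) x 1) γ i) * γ 2 +
      (pd3 (fun y => c y 0) γ 0 + pd3 (fun y => c y 1) γ 1) * (if i = 2 then 1 else 0) -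
      ((if i = 0 then 1 else 0) * pd3 (fun y => c y 0) γ 2 +
        γ 0 * pd3 (fun x => pd3 (fun y => c y 0) x 2) γ i +
       ((if i = 1 then 1 else 0) * pd3 (fun y => c y 1) γ 2 +
        γ 1 * pd3 (fun x => pd3 (fun y => c y 1) x 2) γ i)) -
      pd3 (fun y => c y 2) γ i := by
    intro γ i
    rw [hb2]
    exact pd3_comb' _ _ _ _ _ γ 2 0 1 i
      ((hd1 0 0).differentiable (by simp) γ) ((hd1 1 1).differentiable (by simp) γ)
      ((hd1 0 2).differentiable (by simp) γ) ((hd1 1 2).differentiable (by simp) γ)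
      ((hcc 2).differentiable (by simp) γ)
  have key : ∀ γ : V3, dot3 γ (curl3 b γ) = 0 := by
    intro γ
    simp only [dot3, curl3, Matrix.cons_val_zero, Matrix.cons_val_one, Matrix.head_cons,
      Matrix.cons_val_two, Matrix.tail_cons]
    rw [pdb0, pdb0, pdb1, pdb1, pdb2, pdb2]
    rw [pd3_swap' (fun y => c y 2) (hcc 2) γ 2 1,
        pd3_swap' (fun y => c y 0) (hcc 0) γ 1 0,
        pd3_swap' (fun y => c y 2) (hcc 2) γ 1 0,
        pd3_swap' (fun y => c y 2) (hcc 2) γ 2 0,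
        pd3_swap' (fun y => c y 0) (hcc 0) γ 2 0,
        pd3_swap' (fun y => c y 1) (hcc 1) γ 2 0,
        pd3_swap' (fun y => c y 1) (hcc 1) γ 1 0,
        pd3_swap' (fun y => c y 0) (hcc 0) γ 2 1,
        pd3_swap' (fun y => c y 1) (hcc 1) γ 2 1]
    simp only [Fin.reduceEq, reduceIte]
    ring
  refine ⟨key, ?_⟩
  intro γ
  have e0 : (fun x : V3 => cross3 x (b x) 0) = fun x : V3 => x 1 * b x 2 - x 2 * b x 1 := by
    funext x; simp only [cross3, Matrix.cons_val_zero]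
  have e1 : (fun x : V3 => cross3 x (b x) 1) = fun x : V3 => x 2 * b x 0 - x 0 * b x 2 := by
    funext x; simp only [cross3, Matrix.cons_val_one, Matrix.head_cons, Matrix.cons_val_zero]
  have e2 : (fun x : V3 => cross3 x (b x) 2) = fun x : V3 => x 0 * b x 1 - x 1 * b x 0 := by
    funext x; simp only [cross3, Matrix.cons_val_two, Matrix.tail_cons, Matrix.head_cons]
  have h0 : pd3 (fun x : V3 => cross3 x (b x) 0) γ 0 =
      (if (0 : Fin 3) = 1 then 1 else 0) * b γ 2 + γ 1 * pd3 (fun x => b x 2) γ 0 -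
      ((if (0 : Fin 3) = 2 then 1 else 0) * b γ 1 + γ 2 * pd3 (fun x => b x 1) γ 0) := by
    rw [e0, pd3_sub' (fun x => x 1 * b x 2) (fun x => x 2 * b x 1) γ 0 ((diffAt_coord' γ 1).mul (hcb2.differentiable (by simp) γ))
          ((diffAt_coord' γ 2).mul (hcb1.differentiable (by simp) γ)),
        pd3_mul' _ _ γ 0 (diffAt_coord' γ 1) (hcb2.differentiable (by simp) γ),
        pd3_mul' _ _ γ 0 (diffAt_coord' γ 2) (hcb1.differentiable (by simp) γ),
        pd3_coord', pd3_coord']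
  have h1 : pd3 (fun x : V3 => cross3 x (b x) 1) γ 1 =
      (if (1 : Fin 3) = 2 then 1 else 0) * b γ 0 + γ 2 * pd3 (fun x => b x 0) γ 1 -
      ((if (1 : Fin 3) = 0 then 1 else 0) * b γ 2 + γ 0 * pd3 (fun x => b x 2) γ 1) := by
    rw [e1, pd3_sub' (fun x => x 2 * b x 0) (fun x => x 0 * b x 2) γ 1 ((diffAt_coord' γ 2).mul (hcb0.differentiable (by simp) γ))
          ((diffAt_coord' γ 0).mul (hcb2.differentiable (by simp) γ)),
        pd3_mul' _ _ γ 1 (diffAt_coord' γ 2) (hcb0.differentiable (by simp) γ),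
        pd3_mul' _ _ γ 1 (diffAt_coord' γ 0) (hcb2.differentiable (by simp) γ),
        pd3_coord', pd3_coord']
  have h2 : pd3 (fun x : V3 => cross3 x (b x) 2) γ 2 =
      (if (2 : Fin 3) = 0 then 1 else 0) * b γ 1 + γ 0 * pd3 (fun x => b x 1) γ 2 -
      ((if (2 : Fin 3) = 1 then 1 else 0) * b γ 0 + γ 1 * pd3 (fun x => b x 0) γ 2) := by
    rw [e2, pd3_sub' (fun x => x 0 * b x 1) (fun x => x 1 * b x 0) γ 2 ((diffAt_coord' γ 0).mul (hcb1.differentiable (by simp) γ))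
          ((diffAt_coord' γ 1).mul (hcb0.differentiable (by simp) γ)),
        pd3_mul' _ _ γ 2 (diffAt_coord' γ 0) (hcb1.differentiable (by simp) γ),
        pd3_mul' _ _ γ 2 (diffAt_coord' γ 1) (hcb0.differentiable (by simp) γ),
        pd3_coord', pd3_coord']
  have hkey := key γ
  simp only [dot3, curl3, Matrix.cons_val_zero, Matrix.cons_val_one, Matrix.head_cons,
    Matrix.cons_val_two, Matrix.tail_cons] at hkey
  simp only [div3, Fin.sum_univ_three, h0, h1, h2]
  simp only [Fin.reduceEq, reduceIte]
  linear_combination (-1 : ℝ) * hkey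
end
end

section
/- Fix A = diag(a1,a2,a3) and d > 0, and on the domain g = √(1 − d(γ,Aγ)) > 0 consider the bivector P_ψ with brackets {γ_i,γ_j} = 0, {M_i,γ_j} = g ε_{ijk}γ_k, {M_i,M_j} = g ε_{ijk}M_k − (d/g)(M,Aγ) ε_{ijk}γ_k, and the Hamiltonian H(γ,M) = ½(M, A_γM) + V(γ) with ω = A_γM := AM + d(γ,AM) g^{-2} Aγ. Then the conformally Hamiltonian equations ẋ_i = g^{-1}{H, x_i} coincide exactly with the Chaplygin sphere equations γ̇ = γ×ω, Ṁ = M×ω − ∇V(γ)×γ. -/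
noncomputable section

set_option maxHeartbeats 4000000 in
/-- The conformally Hamiltonian equations `ẋ = g⁻¹{H, x}` generated by the
bivector `P_ψ` and the Hamiltonian `H = ½(M, A_γM) + V(γ)` coincide with the Chaplygin
sphere equations `γ̇ = γ×ω`, `Ṁ = M×ω − ∇V(γ)×γ`, `ω = A_γM`. -/
theorem chaplygin_sphere_conformally_hamiltonian
    (a : V3) (d : ℝ) (hd : 0 < d)
    (V : V3 → ℝ) (hV : ContDiff ℝ (⊤ : ℕ∞) V)
    (p : V3 × V3) (hdom : 0 < 1 - d * dot3 p.1 (dvec a p.1)) :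
    (∀ i : Fin 3,
      (gfun a d p.1)⁻¹ * hamVF (Ppsiphi a d (fun _ => 0)) (Hch a d V) p (Sum.inl i) =
        cross3 p.1 (omegaCh a d p.1 p.2) i) ∧
    (∀ i : Fin 3,
      (gfun a d p.1)⁻¹ * hamVF (Ppsiphi a d (fun _ => 0)) (Hch a d V) p (Sum.inr i) =
        (cross3 p.2 (omegaCh a d p.1 p.2) - cross3 (grad3 V p.1) p.1) i) := by
  have hw0 : (1 - d * dot3 p.1 (dvec a p.1)) ≠ 0 := ne_of_gt hdom
  have hgpos : 0 < gfun a d p.1 := Real.sqrt_pos.mpr hdom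
  have hg2 : gfun a d p.1 ^ 2 = 1 - d * dot3 p.1 (dvec a p.1) := Real.sq_sqrt hdom.le
  have hx : ∀ i : Fin 3, HasFDerivAt (fun q : V3 × V3 => q.1 i)
      ((ContinuousLinearMap.proj i).comp (ContinuousLinearMap.fst ℝ V3 V3)) p :=
    fun i => ((ContinuousLinearMap.proj i).comp (ContinuousLinearMap.fst ℝ V3 V3)).hasFDerivAt
  have hy : ∀ i : Fin 3, HasFDerivAt (fun q : V3 × V3 => q.2 i)
      ((ContinuousLinearMap.proj i).comp (ContinuousLinearMap.snd ℝ V3 V3)) p :=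
    fun i => ((ContinuousLinearMap.proj i).comp (ContinuousLinearMap.snd ℝ V3 V3)).hasFDerivAt
  have hs := (((hx 0).mul ((hy 0).const_mul (a 0))).add
      ((hx 1).mul ((hy 1).const_mul (a 1)))).add ((hx 2).mul ((hy 2).const_mul (a 2)))
  have hq := (((hx 0).mul ((hx 0).const_mul (a 0))).add
      ((hx 1).mul ((hx 1).const_mul (a 1)))).add ((hx 2).mul ((hx 2).const_mul (a 2)))
  have hw := (hq.const_mul d).const_sub 1
  have hwinv := (hasFDerivAt_inv' (𝕜 := ℝ) hw0).comp p hw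
  have hdsw := (hs.const_mul d).mul hwinv
  have hVf := ((hV.differentiable (by simp) p.1).hasFDerivAt).comp p
    (hasFDerivAt_fst : HasFDerivAt _ (ContinuousLinearMap.fst ℝ V3 V3) p)
  have hterm : ∀ i : Fin 3, HasFDerivAt
      (fun q : V3 × V3 => q.2 i * (a i * q.2 i +
        d * (q.1 0 * (a 0 * q.2 0) + q.1 1 * (a 1 * q.2 1) + q.1 2 * (a 2 * q.2 2)) *
          (1 - d * (q.1 0 * (a 0 * q.1 0) + q.1 1 * (a 1 * q.1 1) + q.1 2 * (a 2 * q.1 2)))⁻¹ *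
          (a i * q.1 i))) _ p :=
    fun i => (hy i).mul (((hy i).const_mul (a i)).add (hdsw.mul ((hx i).const_mul (a i))))
  have hH : HasFDerivAt (Hch a d V) _ p :=
    ((((hterm 0).add (hterm 1)).add (hterm 2)).const_mul ((1:ℝ)/2)).add hVf
  have hF := hH.fderiv
  have hM : ∀ i : Fin 3, fderiv ℝ (Hch a d V) p ((0:V3), Pi.single i 1) =
      omegaCh a d p.1 p.2 i := by
    intro i
    rw [hF]
    fin_cases i <;>
      · simp [omegaCh, dot3, dvec, ContinuousLinearMap.add_apply,
          ContinuousLinearMap.comp_apply, ContinuousLinearMap.smul_apply,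
          ContinuousLinearMap.neg_apply, ContinuousLinearMap.proj_apply,
          ContinuousLinearMap.coe_fst', ContinuousLinearMap.coe_snd',
          Pi.single_apply, smul_eq_mul]
        ring
  have hG : ∀ i : Fin 3, fderiv ℝ (Hch a d V) p (Pi.single i 1, (0:V3)) =
      d * dot3 p.1 (dvec a p.2) * (1 - d * dot3 p.1 (dvec a p.1))⁻¹ *
        omegaCh a d p.1 p.2 i + fderiv ℝ V p.1 (Pi.single i 1) := by
    intro i
    rw [hF]
    fin_cases i <;>
      · simp [omegaCh, dot3, dvec, ContinuousLinearMap.add_apply,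
          ContinuousLinearMap.comp_apply, ContinuousLinearMap.smul_apply,
          ContinuousLinearMap.neg_apply, ContinuousLinearMap.proj_apply,
          ContinuousLinearMap.coe_fst', ContinuousLinearMap.coe_snd',
          Pi.single_apply, smul_eq_mul]
        ring
  have hsym : dot3 p.2 (dvec a p.1) = dot3 p.1 (dvec a p.2) := by
    simp [dot3, dvec]; ring
  constructor <;> intro i <;>
    · simp only [hamVF, Fintype.sum_sum_type, Fin.sum_univ_three, bvec, hM, hG,
        Ppsiphi, hsym]
      rw [← hg2]
      fin_cases i <;>
        · simp [cross3, grad3, pd3, eps, Fin.sum_univ_three, Pi.sub_apply]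
          field_simp
          ring
end
end
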